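/- arXiv:1001.1459 — 11 statements merged into one kernel-verified Lean document; each statement's English description precedes it below -/
import Mathlib

section
/- Let R be a ring and let A, B be unital subrings of R. If X is an invertible A-B-submodule of R (i.e., a unital A-B-submodule X with a unital B-A-submodule X⁻¹ satisfying X X⁻¹ = A and X⁻¹ X = B), then X is finitely generated and projective as a right B-module. -/
open Pointwise

/-- `A` is a unital subring of the (possibly non-unital) ring `R`, with identity element
`oneA` (not necessarily an identity of `R`). -/
structure IsUnitalSubring {R : Type*} [NonUnitalRing R] (A : AddSubgroup R) (oneA : R) : Prop where
  one_mem : oneA ∈ A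
  mul_mem : ∀ ⦃a⦄, a ∈ A → ∀ ⦃b⦄, b ∈ A → a * b ∈ A
  one_mul : ∀ a ∈ A, oneA * a = a
  mul_one : ∀ a ∈ A, a * oneA = a

/-- `X` is an invertible (unital) `A`-`B`-submodule of `R` with inverse `Xinv`:
`X Xinv = A` and `Xinv X = B`, where products denote the additive subgroup generated by
all products (i.e. finite sums of products). -/
structure IsInvertibleSubmodule {R : Type*} [NonUnitalRing R]
    (A B : AddSubgroup R) (oneA oneB : R) (X Xinv : AddSubgroup R) : Prop where
  unitalA : IsUnitalSubring A oneA
  unitalB : IsUnitalSubring B oneB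
  smul_mem : ∀ ⦃a⦄, a ∈ A → ∀ ⦃x⦄, x ∈ X → a * x ∈ X
  mem_smul : ∀ ⦃x⦄, x ∈ X → ∀ ⦃b⦄, b ∈ B → x * b ∈ X
  one_smul : ∀ x ∈ X, oneA * x = x
  smul_one : ∀ x ∈ X, x * oneB = x
  smul_mem' : ∀ ⦃b⦄, b ∈ B → ∀ ⦃y⦄, y ∈ Xinv → b * y ∈ Xinv
  mem_smul' : ∀ ⦃y⦄, y ∈ Xinv → ∀ ⦃a⦄, a ∈ A → y * a ∈ Xinv
  one_smul' : ∀ y ∈ Xinv, oneB * y = y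
  smul_one' : ∀ y ∈ Xinv, y * oneA = y
  mul_inv : X * Xinv = A
  inv_mul : Xinv * X = B

/-- The ring structure on a unital subring of `R`. -/
def IsUnitalSubring.ring {R : Type*} [NonUnitalRing R] {A : AddSubgroup R} {oneA : R}
    (h : IsUnitalSubring A oneA) : Ring A :=
  { (inferInstance : AddCommGroup A) with
    mul := fun a b => ⟨a.1 * b.1, h.mul_mem a.2 b.2⟩
    one := ⟨oneA, h.one_mem⟩
    mul_assoc := fun a b c => Subtype.ext (mul_assoc a.1 b.1 c.1)
    one_mul := fun a => Subtype.ext (h.one_mul a.1 a.2)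
    mul_one := fun a => Subtype.ext (h.mul_one a.1 a.2)
    left_distrib := fun a b c => Subtype.ext (mul_add a.1 b.1 c.1)
    right_distrib := fun a b c => Subtype.ext (add_mul a.1 b.1 c.1)
    zero_mul := fun a => Subtype.ext (zero_mul a.1)
    mul_zero := fun a => Subtype.ext (mul_zero a.1) }

/-- The right `B`-module structure on `X`, given as a module over the opposite ring. -/
def IsInvertibleSubmodule.rightModule {R : Type*} [NonUnitalRing R]
    {A B : AddSubgroup R} {oneA oneB : R} {X Xinv : AddSubgroup R}
    (h : IsInvertibleSubmodule A B oneA oneB X Xinv) :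
    letI := h.unitalB.ring
    Module (↥B)ᵐᵒᵖ ↥X := by
  letI := h.unitalB.ring
  exact
  { smul := fun b x => ⟨x.1 * b.unop.1, h.mem_smul x.2 b.unop.2⟩
    one_smul := fun x => Subtype.ext (h.smul_one x.1 x.2)
    mul_smul := fun b b' x => Subtype.ext (mul_assoc x.1 b'.unop.1 b.unop.1).symm
    smul_zero := fun b => Subtype.ext (zero_mul b.unop.1)
    smul_add := fun b x y => Subtype.ext (add_mul x.1 y.1 b.unop.1)
    add_smul := fun b b' x => Subtype.ext (mul_add x.1 b.unop.1 b'.unop.1)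
    zero_smul := fun x => Subtype.ext (mul_zero x.1) }

/-!
Write `1_A = ∑ xᵢ yᵢ` with `xᵢ ∈ X`, `yᵢ ∈ X⁻¹`. Each `yᵢ` gives a right `B`-linear functional
`z ↦ yᵢ z` from `X` to `B` (since `X⁻¹ X = B`), and `z = 1_A z = ∑ xᵢ (yᵢ z)` for `z ∈ X`. So the
`xᵢ` together with these functionals form a finite dual basis of `X`.
-/

theorem AddSubmonoid.exists_fin_sum_mul_eq_of_mem_mul {R : Type*} [NonUnitalNonAssocSemiring R]
    {M N : AddSubmonoid R} {r : R} (hr : r ∈ M * N) :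
    ∃ (n : ℕ) (x y : Fin n → R), (∀ i, x i ∈ M) ∧ (∀ i, y i ∈ N) ∧ ∑ i, x i * y i = r := by
  refine AddSubmonoid.mul_induction_on hr
    (fun m hm n hn ↦ ⟨1, fun _ ↦ m, fun _ ↦ n, fun _ ↦ hm, fun _ ↦ hn, by simp⟩) ?_
  rintro _ _ ⟨k, x, y, hx, hy, rfl⟩ ⟨l, x', y', hx', hy', rfl⟩
  exact ⟨k + l, Fin.append x x', Fin.append y y',
    Fin.addCases (by simpa using hx) (by simpa using hx'),
    Fin.addCases (by simpa using hy) (by simpa using hy'), by simp [Fin.sum_univ_add]⟩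

theorem Module.finite_projective_of_dual_basis {S M ι : Type*} [Semiring S] [AddCommMonoid M]
    [Module S M] [Fintype ι] (x : ι → M) (f : ι → M →ₗ[S] S) (hxf : ∀ z, ∑ i, f i z • x i = z) :
    Module.Finite S M ∧ Module.Projective S M := by
  have hsplit : Fintype.linearCombination S x ∘ₗ LinearMap.pi f = LinearMap.id :=
    LinearMap.ext hxf
  exact ⟨.of_surjective (Fintype.linearCombination S x)
      fun z ↦ ⟨LinearMap.pi f z, LinearMap.congr_fun hsplit z⟩,
    .of_split _ _ hsplit⟩

namespace IsInvertibleSubmodule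

variable {R : Type*} [NonUnitalRing R] {A B : AddSubgroup R} {oneA oneB : R}
  {X Xinv : AddSubgroup R}

theorem rightModule_smul_coe (h : IsInvertibleSubmodule A B oneA oneB X Xinv) (b : (↥B)ᵐᵒᵖ)
    (z : X) :
    letI := h.unitalB.ring
    letI := h.rightModule
    ((b • z : X) : R) = z * (b.unop : R) :=
  rfl

theorem inv_mul_mem (h : IsInvertibleSubmodule A B oneA oneB X Xinv) {y z : R}
    (hy : y ∈ Xinv) (hz : z ∈ X) : y * z ∈ B :=
  h.inv_mul ▸ AddSubmonoid.mul_mem_mul hy hz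

def mulLeft (h : IsInvertibleSubmodule A B oneA oneB X Xinv) {y : R} (hy : y ∈ Xinv) :
    letI := h.unitalB.ring
    letI := h.rightModule
    X →ₗ[(↥B)ᵐᵒᵖ] (↥B)ᵐᵒᵖ :=
  letI := h.unitalB.ring
  letI := h.rightModule
  { toFun := fun z ↦ .op ⟨y * z, h.inv_mul_mem hy z.2⟩
    map_add' := fun z w ↦ congrArg MulOpposite.op (Subtype.ext (mul_add y z w))
    map_smul' := fun b z ↦ congrArg MulOpposite.op (Subtype.ext (mul_assoc y z b.unop).symm) }

theorem mulLeft_apply_coe (h : IsInvertibleSubmodule A B oneA oneB X Xinv) {y : R}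
    (hy : y ∈ Xinv) (z : X) : ((h.mulLeft hy z).unop : R) = y * z :=
  rfl

end IsInvertibleSubmodule

/-- An invertible `A`-`B`-submodule `X` of `R` is finitely generated and
projective as a right `B`-module. -/
theorem invertibleSubmodule_finite_projective_right {R : Type*} [NonUnitalRing R]
    (A B : AddSubgroup R) (oneA oneB : R) (X Xinv : AddSubgroup R)
    (h : IsInvertibleSubmodule A B oneA oneB X Xinv) :
    letI := h.unitalB.ring
    letI := h.rightModule
    Module.Finite (↥B)ᵐᵒᵖ ↥X ∧ Module.Projective (↥B)ᵐᵒᵖ ↥X := by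
  let := h.unitalB.ring
  let := h.rightModule
  obtain ⟨n, x, y, hx, hy, hone⟩ :=
    AddSubmonoid.exists_fin_sum_mul_eq_of_mem_mul (h.mul_inv ▸ h.unitalA.one_mem : oneA ∈ X * Xinv)
  refine Module.finite_projective_of_dual_basis (fun i ↦ (⟨x i, hx i⟩ : X))
    (fun i ↦ h.mulLeft (hy i)) fun z ↦ Subtype.ext ?_
  calc ((∑ i, h.mulLeft (hy i) z • (⟨x i, hx i⟩ : X) : X) : R)
      = ∑ i, x i * y i * z := by
        simp only [AddSubgroup.val_finsetSum, h.rightModule_smul_coe, h.mulLeft_apply_coe,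
          mul_assoc]
    _ = z := by rw [← Finset.sum_mul, hone, h.one_smul z z.2]
end

section
/- Let R be a ring and let A, B be unital subrings of R. If X is an invertible A-B-submodule of R, then X is finitely generated and projective as a left A-module. -/
/-!
`X` is finitely generated projective by the dual basis lemma. Since `1_B ∈ B = X⁻¹ X`, write
`1_B = ∑ yᵢ xᵢ` with `yᵢ ∈ X⁻¹`, `xᵢ ∈ X`. Right multiplication by `yᵢ` maps `X` into
`X X⁻¹ = A` and is left `A`-linear, and every `z ∈ X` satisfies
`z = z 1_B = ∑ (z yᵢ) xᵢ`; so the `xᵢ` and these functionals form a dual basis.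
-/

open Pointwise

/-- The left `A`-module structure on `X`. -/
def IsInvertibleSubmodule.leftModule {R : Type*} [NonUnitalRing R]
    {A B : AddSubgroup R} {oneA oneB : R} {X Xinv : AddSubgroup R}
    (h : IsInvertibleSubmodule A B oneA oneB X Xinv) :
    letI := h.unitalA.ring
    Module ↥A ↥X := by
  letI := h.unitalA.ring
  exact
  { smul := fun a x => ⟨a.1 * x.1, h.smul_mem a.2 x.2⟩
    one_smul := fun x => Subtype.ext (h.one_smul x.1 x.2)
    mul_smul := fun a a' x => Subtype.ext (mul_assoc a.1 a'.1 x.1)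
    smul_zero := fun a => Subtype.ext (mul_zero a.1)
    smul_add := fun a x y => Subtype.ext (mul_add a.1 x.1 y.1)
    add_smul := fun a a' x => Subtype.ext (add_mul a.1 a'.1 x.1)
    zero_smul := fun x => Subtype.ext (zero_mul x.1) }

theorem AddSubgroup.exists_sum_mul_eq_of_mem_mul {R : Type*} [NonUnitalNonAssocRing R]
    {M N : AddSubgroup R} {r : R} (hr : r ∈ M * N) :
    ∃ (ι : Type) (_ : Fintype ι) (m n : ι → R),
      (∀ i, m i ∈ M) ∧ (∀ i, n i ∈ N) ∧ ∑ i, m i * n i = r := by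
  refine AddSubmonoid.mul_induction_on (M := M.toAddSubmonoid) (N := N.toAddSubmonoid) hr
    (fun m hm n hn => ⟨Unit, inferInstance, fun _ => m, fun _ => n, fun _ => hm, fun _ => hn,
      by simp⟩) ?_
  rintro _ _ ⟨ι, _, m, n, hm, hn, rfl⟩ ⟨κ, _, m', n', hm', hn', rfl⟩
  exact ⟨ι ⊕ κ, inferInstance, Sum.elim m m', Sum.elim n n', Sum.forall.2 ⟨hm, hm'⟩,
    Sum.forall.2 ⟨hn, hn'⟩, Fintype.sum_sum_type _⟩

theorem Module.finite_projective_of_sum_smul {A M ι : Type*} [Ring A] [AddCommGroup M]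
    [Module A M] [Fintype ι] (x : ι → M) (f : ι → M →ₗ[A] A) (h : ∀ z, ∑ i, f i z • x i = z) :
    Module.Finite A M ∧ Module.Projective A M := by
  have hsplit : Fintype.linearCombination A x ∘ₗ LinearMap.pi f = LinearMap.id :=
    LinearMap.ext fun z => by simp [Fintype.linearCombination_apply, h]
  exact ⟨.of_surjective _ (LinearMap.surjective_of_comp_eq_id _ _ hsplit),
    .of_split _ _ hsplit⟩

def IsInvertibleSubmodule.mulRight {R : Type*} [NonUnitalRing R]
    {A B : AddSubgroup R} {oneA oneB : R} {X Xinv : AddSubgroup R}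
    (h : IsInvertibleSubmodule A B oneA oneB X Xinv) {y : R} (hy : y ∈ Xinv) :
    letI := h.unitalA.ring
    letI := h.leftModule
    ↥X →ₗ[↥A] ↥A :=
  letI := h.unitalA.ring
  letI := h.leftModule
  { toFun := fun z => ⟨z.1 * y, h.mul_inv ▸ AddSubmonoid.mul_mem_mul z.2 hy⟩
    map_add' := fun z w => Subtype.ext (add_mul z.1 w.1 y)
    map_smul' := fun a z => Subtype.ext (mul_assoc a.1 z.1 y) }

/-- An invertible `A`-`B`-submodule `X` of `R` is finitely generated and
projective as a left `A`-module. -/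
theorem invertibleSubmodule_finite_projective_left {R : Type*} [NonUnitalRing R]
    (A B : AddSubgroup R) (oneA oneB : R) (X Xinv : AddSubgroup R)
    (h : IsInvertibleSubmodule A B oneA oneB X Xinv) :
    letI := h.unitalA.ring
    letI := h.leftModule
    Module.Finite ↥A ↥X ∧ Module.Projective ↥A ↥X := by
  let := h.unitalA.ring
  let := h.leftModule
  obtain ⟨ι, _, y, x, hy, hx, hsum⟩ :=
    AddSubgroup.exists_sum_mul_eq_of_mem_mul (h.inv_mul ▸ h.unitalB.one_mem)
  refine Module.finite_projective_of_sum_smul (fun i => ⟨x i, hx i⟩)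
    (fun i => h.mulRight (hy i)) fun z => Subtype.ext ?_
  calc ((∑ i, h.mulRight (hy i) z • (⟨x i, hx i⟩ : X) : X) : R)
      = ∑ i, z.1 * y i * x i := map_sum X.subtype _ _
    _ = z.1 * oneB := by simp only [mul_assoc, ← Finset.mul_sum, hsum]
    _ = z.1 := h.smul_one z.1 z.2
end

section
/- With R, S rings, A, B, C unital subrings of R, X : B → A and Y : C → B invertible submodules of R, M, N R-S-bimodules, and g in Hom_{C,S}(CM, CN): the induced maps satisfy (g^Y)^X = g^{XY}, where XY is the invertible A-C-submodule given by the product of X and Y. -/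
/-
Both `(g^Y)^X` and `g^{XY}` are additive on `AM`, which is generated by the elements `a m` with
`a ∈ A = X X⁻¹`; both sides are also additive in `a`, so it suffices to compare them on
`(x u) m = x (u m)` with `x ∈ X`. There `(g^Y)^X (x m) = x g^Y (1_B m)`, and writing
`1_B ∈ B = Y Y⁻¹` as a sum of products `y w` gives
`x g^Y (y w m) = (x y) g (1_C w m) = g^{XY} ((x y) w m)` because `x y ∈ XY`.
-/

open Pointwise

/-- `M` is an `R`-`S`-bimodule via the left action `ρ` and the right action `τ`. -/
structure IsBimodule (R S M : Type*) [NonUnitalRing R] [NonUnitalRing S] [AddCommGroup M]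
    (ρ : R → M → M) (τ : M → S → M) : Prop where
  add_smul : ∀ r r' m, ρ (r + r') m = ρ r m + ρ r' m
  smul_add : ∀ r m m', ρ r (m + m') = ρ r m + ρ r m'
  mul_smul : ∀ r r' m, ρ (r * r') m = ρ r (ρ r' m)
  smul_add' : ∀ m m' s, τ (m + m') s = τ m s + τ m' s
  add_smul' : ∀ m s s', τ m (s + s') = τ m s + τ m s'
  smul_mul' : ∀ m s s', τ m (s * s') = τ (τ m s) s'
  smul_comm : ∀ r m s, τ (ρ r m) s = ρ r (τ m s)

/-- For a subring `A` of `R`, the sub-bimodule `AM` of `M`: the additive subgroup generated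
by all products `a • m` with `a ∈ A`, `m ∈ M`. -/
def actSpan {R M : Type*} [NonUnitalRing R] [AddCommGroup M]
    (ρ : R → M → M) (A : AddSubgroup R) : AddSubgroup M :=
  AddSubgroup.closure {x | ∃ a ∈ A, ∃ m : M, x = ρ a m}

/-- `f` belongs to `Hom_{B,S}(BM, BN)`: it maps `BM` to `BN` and is left `B`-linear and
right `S`-linear there. -/
def IsHomBS {R S M N : Type*} [NonUnitalRing R] [NonUnitalRing S]
    [AddCommGroup M] [AddCommGroup N]
    (B : AddSubgroup R) (ρM : R → M → M) (τM : M → S → M)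
    (ρN : R → N → N) (τN : N → S → N) (f : M → N) : Prop :=
  (∀ m ∈ actSpan ρM B, f m ∈ actSpan ρN B) ∧
  (∀ m ∈ actSpan ρM B, ∀ m' ∈ actSpan ρM B, f (m + m') = f m + f m') ∧
  (∀ b ∈ B, ∀ m ∈ actSpan ρM B, f (ρM b m) = ρN b (f m)) ∧
  (∀ m ∈ actSpan ρM B, ∀ s : S, f (τM m s) = τN (f m) s)

/-- `g` is the map `f^X ∈ Hom_{A,S}(AM, AN)` induced by `f ∈ Hom_{B,S}(BM, BN)` along the
invertible `A`-`B`-submodule `X`, i.e. it is left `A`-linear and right `S`-linear on `AM` and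
satisfies `g (x • m) = x • f (1_B • m)` for all `x ∈ X`, `m ∈ M`. -/
def IsInducedMap {R S M N : Type*} [NonUnitalRing R] [NonUnitalRing S]
    [AddCommGroup M] [AddCommGroup N]
    (A : AddSubgroup R) (oneB : R) (X : AddSubgroup R)
    (ρM : R → M → M) (τM : M → S → M)
    (ρN : R → N → N) (τN : N → S → N) (f g : M → N) : Prop :=
  (∀ m ∈ actSpan ρM A, g m ∈ actSpan ρN A) ∧
  (∀ m ∈ actSpan ρM A, ∀ m' ∈ actSpan ρM A, g (m + m') = g m + g m') ∧
  (∀ a ∈ A, ∀ m ∈ actSpan ρM A, g (ρM a m) = ρN a (g m)) ∧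
  (∀ m ∈ actSpan ρM A, ∀ s : S, g (τM m s) = τN (g m) s) ∧
  (∀ x ∈ X, ∀ m : M, g (ρM x m) = ρN x (f (ρM oneB m)))

theorem AddSubgroup.eqOn_closure_of_map_add {G N : Type*} [AddGroup G] [AddGroup N]
    {s : Set G} {f f' : G → N}
    (hf : ∀ a ∈ closure s, ∀ b ∈ closure s, f (a + b) = f a + f b)
    (hf' : ∀ a ∈ closure s, ∀ b ∈ closure s, f' (a + b) = f' a + f' b)
    (h : Set.EqOn f f' s) : Set.EqOn f f' (closure s) := by
  intro m hm
  let φ : closure s →+ N := AddMonoidHom.mk' (fun a => f a) fun a b => hf a a.2 b b.2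
  let φ' : closure s →+ N := AddMonoidHom.mk' (fun a => f' a) fun a b => hf' a a.2 b b.2
  have hm' : (⟨m, hm⟩ : closure s) ∈ closure (((↑) : closure s → G) ⁻¹' s) := by
    rw [closure_closure_coe_preimage]
    trivial
  exact AddMonoidHom.eqOn_closure (f := φ) (g := φ') (fun a ha => h ha) hm'

theorem AddSubgroup.eqOn_mul_of_map_add {R N : Type*} [NonUnitalRing R] [AddMonoid N]
    {X Y : AddSubgroup R} {f f' : R → N}
    (hf : ∀ a ∈ X * Y, ∀ b ∈ X * Y, f (a + b) = f a + f b)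
    (hf' : ∀ a ∈ X * Y, ∀ b ∈ X * Y, f' (a + b) = f' a + f' b)
    (h : ∀ x ∈ X, ∀ y ∈ Y, f (x * y) = f' (x * y)) :
    Set.EqOn f f' ((X * Y : AddSubgroup R) : Set R) := by
  intro r hr
  refine (AddSubmonoid.mul_induction_on (C := fun r => r ∈ X * Y ∧ f r = f' r)
    (hr : r ∈ X.toAddSubmonoid * Y.toAddSubmonoid) ?_ ?_).2
  · exact fun x hx y hy => ⟨AddSubmonoid.mul_mem_mul hx hy, h x hx y hy⟩
  · rintro a b ⟨ha, hfa⟩ ⟨hb, hfb⟩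
    exact ⟨add_mem ha hb, by rw [hf a ha b hb, hf' a ha b hb, hfa, hfb]⟩

section InducedMap

variable {R S M N : Type*} [NonUnitalRing R] [NonUnitalRing S] [AddCommGroup M] [AddCommGroup N]
  {ρM : R → M → M} {τM : M → S → M} {ρN : R → N → N} {τN : N → S → N}

theorem smul_mem_actSpan {A : AddSubgroup R} {a : R} (ha : a ∈ A) (m : M) :
    ρM a m ∈ actSpan ρM A :=
  AddSubgroup.subset_closure ⟨a, ha, m, rfl⟩

theorem IsInvertibleSubmodule.smul_mem_actSpan {A B X Xinv : AddSubgroup R} {oneA oneB : R}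
    (hX : IsInvertibleSubmodule A B oneA oneB X Xinv) (hM : IsBimodule R S M ρM τM)
    {x : R} (hx : x ∈ X) (m : M) : ρM x m ∈ actSpan ρM A := by
  rw [← hX.one_smul x hx, hM.mul_smul]
  exact _root_.smul_mem_actSpan hX.unitalA.one_mem _

theorem IsInducedMap.map_add_smul {A : AddSubgroup R} {oneB : R} {X : AddSubgroup R}
    {f φ : M → N} (hφ : IsInducedMap A oneB X ρM τM ρN τN f φ) (hM : IsBimodule R S M ρM τM)
    {r r' : R} {m : M} (hr : ρM r m ∈ actSpan ρM A) (hr' : ρM r' m ∈ actSpan ρM A) :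
    φ (ρM (r + r') m) = φ (ρM r m) + φ (ρM r' m) := by
  rw [hM.add_smul, hφ.2.1 _ hr _ hr']

theorem IsInducedMap.map_smul_of_mem {A : AddSubgroup R} {oneB : R} {X : AddSubgroup R}
    {f φ : M → N} (hφ : IsInducedMap A oneB X ρM τM ρN τN f φ) {x : R} (hx : x ∈ X) (m : M) :
    φ (ρM x m) = ρN x (f (ρM oneB m)) :=
  hφ.2.2.2.2 x hx m

theorem IsInducedMap.smul_map_smul_eq_map_mul_smul {A B C X Xinv Y Yinv : AddSubgroup R}
    {oneA oneB oneC : R} (hX : IsInvertibleSubmodule A B oneA oneB X Xinv)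
    (hY : IsInvertibleSubmodule B C oneB oneC Y Yinv)
    (hM : IsBimodule R S M ρM τM) (hN : IsBimodule R S N ρN τN) {g gY gXY : M → N}
    (hgY : IsInducedMap B oneC Y ρM τM ρN τN g gY)
    (hgXY : IsInducedMap A oneC (X * Y) ρM τM ρN τN g gXY)
    {x : R} (hx : x ∈ X) {b : R} (hb : b ∈ B) (m : M) :
    ρN x (gY (ρM b m)) = gXY (ρM (x * b) m) := by
  rw [← hY.mul_inv] at hb
  refine AddSubgroup.eqOn_mul_of_map_add (f := fun b => ρN x (gY (ρM b m)))
    (f' := fun b => gXY (ρM (x * b) m)) ?_ ?_ ?_ hb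
  · rw [hY.mul_inv]
    intro b₁ hb₁ b₂ hb₂
    rw [hgY.map_add_smul hM (smul_mem_actSpan hb₁ m) (smul_mem_actSpan hb₂ m), hN.smul_add]
  · rw [hY.mul_inv]
    intro b₁ hb₁ b₂ hb₂
    rw [mul_add, hgXY.map_add_smul hM (hX.smul_mem_actSpan hM (hX.mem_smul hx hb₁) m)
      (hX.smul_mem_actSpan hM (hX.mem_smul hx hb₂) m)]
  · intro y hy w _
    have hxy : x * y ∈ X * Y := AddSubmonoid.mul_mem_mul hx hy
    rw [hM.mul_smul y w m, hgY.map_smul_of_mem hy, ← hN.mul_smul, ← mul_assoc,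
      hM.mul_smul (x * y), hgXY.map_smul_of_mem hxy]

theorem IsInducedMap.inducedMap_comp_smul {A B C X Xinv Y Yinv : AddSubgroup R}
    {oneA oneB oneC : R} (hX : IsInvertibleSubmodule A B oneA oneB X Xinv)
    (hY : IsInvertibleSubmodule B C oneB oneC Y Yinv)
    (hM : IsBimodule R S M ρM τM) (hN : IsBimodule R S N ρN τN) {g gY gYX gXY : M → N}
    (hgY : IsInducedMap B oneC Y ρM τM ρN τN g gY)
    (hgYX : IsInducedMap A oneB X ρM τM ρN τN gY gYX)
    (hgXY : IsInducedMap A oneC (X * Y) ρM τM ρN τN g gXY)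
    {a : R} (ha : a ∈ A) (m : M) :
    gYX (ρM a m) = gXY (ρM a m) := by
  have on_X : ∀ x ∈ X, ∀ m, gYX (ρM x m) = gXY (ρM x m) := fun x hx m => by
    rw [hgYX.map_smul_of_mem hx,
      hgY.smul_map_smul_eq_map_mul_smul hX hY hM hN hgXY hx hX.unitalB.one_mem,
      hX.smul_one x hx]
  rw [← hX.mul_inv] at ha
  refine AddSubgroup.eqOn_mul_of_map_add (f := fun a => gYX (ρM a m))
    (f' := fun a => gXY (ρM a m)) ?_ ?_ ?_ ha
  · rw [hX.mul_inv]
    exact fun a₁ h₁ a₂ h₂ =>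
      hgYX.map_add_smul hM (smul_mem_actSpan h₁ m) (smul_mem_actSpan h₂ m)
  · rw [hX.mul_inv]
    exact fun a₁ h₁ a₂ h₂ =>
      hgXY.map_add_smul hM (smul_mem_actSpan h₁ m) (smul_mem_actSpan h₂ m)
  · intro x hx u _
    rw [hM.mul_smul]
    exact on_X x hx _

end InducedMap

theorem inducedMap_comp_general {R S M N : Type*} [NonUnitalRing R] [NonUnitalRing S]
    [AddCommGroup M] [AddCommGroup N]
    (A B C : AddSubgroup R) (oneA oneB oneC : R) (X Xinv Y Yinv : AddSubgroup R)
    (hX : IsInvertibleSubmodule A B oneA oneB X Xinv)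
    (hY : IsInvertibleSubmodule B C oneB oneC Y Yinv)
    (ρM : R → M → M) (τM : M → S → M) (ρN : R → N → N) (τN : N → S → N)
    (hM : IsBimodule R S M ρM τM) (hN : IsBimodule R S N ρN τN)
    (g : M → N)
    (gY : M → N) (hgY : IsInducedMap B oneC Y ρM τM ρN τN g gY)
    (gYX : M → N) (hgYX : IsInducedMap A oneB X ρM τM ρN τN gY gYX)
    (gXY : M → N) (hgXY : IsInducedMap A oneC (X * Y) ρM τM ρN τN g gXY) :
    Set.EqOn gYX gXY (actSpan ρM A) :=
  AddSubgroup.eqOn_closure_of_map_add hgYX.2.1 hgXY.2.1 <| by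
    rintro _ ⟨a, ha, m, rfl⟩
    exact hgY.inducedMap_comp_smul hX hY hM hN hgYX hgXY ha m

/-- For invertible submodules `X : B → A` and `Y : C → B` and
`g ∈ Hom_{C,S}(CM, CN)`, the induced maps satisfy `(g^Y)^X = g^{XY}` (as maps on `AM`). -/
theorem inducedMap_comp {R S M N : Type*} [NonUnitalRing R] [NonUnitalRing S]
    [AddCommGroup M] [AddCommGroup N]
    (A B C : AddSubgroup R) (oneA oneB oneC : R) (X Xinv Y Yinv : AddSubgroup R)
    (hX : IsInvertibleSubmodule A B oneA oneB X Xinv)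
    (hY : IsInvertibleSubmodule B C oneB oneC Y Yinv)
    (ρM : R → M → M) (τM : M → S → M) (ρN : R → N → N) (τN : N → S → N)
    (hM : IsBimodule R S M ρM τM) (hN : IsBimodule R S N ρN τN)
    (g : M → N) (hg : IsHomBS C ρM τM ρN τN g)
    (gY : M → N) (hgY : IsInducedMap B oneC Y ρM τM ρN τN g gY)
    (gYX : M → N) (hgYX : IsInducedMap A oneB X ρM τM ρN τN gY gYX)
    (gXY : M → N) (hgXY : IsInducedMap A oneC (X * Y) ρM τM ρN τN g gXY) :
    Set.EqOn gYX gXY (actSpan ρM A) :=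
  inducedMap_comp_general A B C oneA oneB oneC X Xinv Y Yinv hX hY ρM τM ρN τN hM hN g gY hgY gYX
    hgYX gXY hgXY
end

section
/- With R, S rings, A, B unital subrings of R, X : B → A an invertible submodule, M, N, P R-S-bimodules, f in Hom_{B,S}(BM,BN) and g in Hom_{B,S}(BN,BP): the induced maps satisfy (g ∘ f)^X = g^X ∘ f^X, and id^X = id, and the assignment f ↦ f^X is additive. -/
open Pointwise

/-!
The induced map `f^X` is determined on `AM` by its values on the elements `x • m` with `x ∈ X`:
since `A = X Xinv`, each generator `a • m` of `AM` is a sum of elements `x • (y • m)`, and `f^X`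
is additive on `AM`. So each identity only has to be checked on `x • m`, where it follows from
`x 1_B = x` and, for composition, from `1_B • f (1_B • m) = f (1_B 1_B • m) = f (1_B • m)`.
-/

section InducedMap

variable {R S M N P : Type*} [NonUnitalRing R] [NonUnitalRing S]
  [AddCommGroup M] [AddCommGroup N] [AddCommGroup P]

lemma act_mem_actSpan {ρ : R → M → M} {A : AddSubgroup R} {a : R} (ha : a ∈ A) (m : M) :
    ρ a m ∈ actSpan ρ A :=
  AddSubgroup.subset_closure ⟨a, ha, m, rfl⟩

lemma map_zero_of_map_add {H : AddSubgroup M} {g : M → N}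
    (hg : ∀ m ∈ H, ∀ m' ∈ H, g (m + m') = g m + g m') : g 0 = 0 := by
  simpa using hg 0 H.zero_mem 0 H.zero_mem

lemma map_neg_of_map_add {H : AddSubgroup M} {g : M → N}
    (hg : ∀ m ∈ H, ∀ m' ∈ H, g (m + m') = g m + g m') {m : M} (hm : m ∈ H) :
    g (-m) = -g m := by
  have h := hg m hm (-m) (H.neg_mem hm)
  rw [add_neg_cancel, map_zero_of_map_add hg] at h
  exact eq_neg_of_add_eq_zero_right h.symm

lemma eqOn_closure_of_map_add {s : Set M} {g g' : M → N}
    (hg : ∀ m ∈ AddSubgroup.closure s, ∀ m' ∈ AddSubgroup.closure s, g (m + m') = g m + g m')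
    (hg' : ∀ m ∈ AddSubgroup.closure s, ∀ m' ∈ AddSubgroup.closure s,
      g' (m + m') = g' m + g' m')
    (h : Set.EqOn g g' s) : Set.EqOn g g' (AddSubgroup.closure s) := by
  intro m hm
  induction hm using AddSubgroup.closure_induction with
  | mem x hx => exact h hx
  | zero => rw [map_zero_of_map_add hg, map_zero_of_map_add hg']
  | add x y hx hy ihx ihy => rw [hg x hx y hy, hg' x hx y hy, ihx, ihy]
  | neg x hx ihx => rw [map_neg_of_map_add hg hx, map_neg_of_map_add hg' hx, ihx]

lemma act_eq_of_mul_eq {A X Y : AddSubgroup R} (hXY : X * Y = A)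
    {ρ : R → M → M} {τ : M → S → M} (hM : IsBimodule R S M ρ τ) {g g' : M → N}
    (hg : ∀ m ∈ actSpan ρ A, ∀ m' ∈ actSpan ρ A, g (m + m') = g m + g m')
    (hg' : ∀ m ∈ actSpan ρ A, ∀ m' ∈ actSpan ρ A, g' (m + m') = g' m + g' m')
    (hX : ∀ x ∈ X, ∀ m, g (ρ x m) = g' (ρ x m)) {a : R} (ha : a ∈ A) (m : M) :
    g (ρ a m) = g' (ρ a m) := by
  rw [← hXY] at ha
  refine (AddSubmonoid.mul_induction_on (M := X.toAddSubmonoid) (N := Y.toAddSubmonoid)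
    (C := fun a => a ∈ A ∧ ∀ m, g (ρ a m) = g' (ρ a m)) ha ?_ ?_).2 m
  · intro x hx y hy
    refine ⟨hXY ▸ AddSubmonoid.mul_mem_mul hx hy, fun m => ?_⟩
    rw [hM.mul_smul]
    exact hX x hx (ρ y m)
  · rintro u v ⟨huA, hu⟩ ⟨hvA, hv⟩
    refine ⟨A.add_mem huA hvA, fun m => ?_⟩
    have hum := act_mem_actSpan (ρ := ρ) huA m
    have hvm := act_mem_actSpan (ρ := ρ) hvA m
    rw [hM.add_smul, hg _ hum _ hvm, hg' _ hum _ hvm, hu, hv]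

lemma IsInducedMap.unique {A X Xinv : AddSubgroup R} (hXA : X * Xinv = A) {oneB : R}
    {ρM : R → M → M} {τM : M → S → M} {ρN : R → N → N} {τN : N → S → N}
    (hM : IsBimodule R S M ρM τM) {f F G : M → N}
    (hF : IsInducedMap A oneB X ρM τM ρN τN f F)
    (hG : ∀ m ∈ actSpan ρM A, ∀ m' ∈ actSpan ρM A, G (m + m') = G m + G m')
    (hGX : ∀ x ∈ X, ∀ m, G (ρM x m) = ρN x (f (ρM oneB m))) :
    Set.EqOn F G (actSpan ρM A) := by
  refine eqOn_closure_of_map_add hF.2.1 hG ?_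
  rintro _ ⟨a, ha, m, rfl⟩
  exact act_eq_of_mul_eq hXA hM hF.2.1 hG (fun x hx m => (hF.2.2.2.2 x hx m).trans
    (hGX x hx m).symm) ha m

lemma IsInducedMap.eqOn_comp {A B X Xinv : AddSubgroup R} (hXA : X * Xinv = A) {oneB : R}
    (hB : IsUnitalSubring B oneB)
    {ρM : R → M → M} {τM : M → S → M} {ρN : R → N → N} {τN : N → S → N}
    {ρP : R → P → P} {τP : P → S → P} (hM : IsBimodule R S M ρM τM)
    {f : M → N} {g : N → P} (hf : IsHomBS B ρM τM ρN τN f) {F : M → N} {G : N → P} {H : M → P}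
    (hF : IsInducedMap A oneB X ρM τM ρN τN f F)
    (hG : IsInducedMap A oneB X ρN τN ρP τP g G)
    (hH : IsInducedMap A oneB X ρM τM ρP τP (g ∘ f) H) :
    Set.EqOn H (G ∘ F) (actSpan ρM A) := by
  refine hH.unique hXA hM (fun m hm m' hm' => ?_) (fun x hx m => ?_)
  · simp only [Function.comp_apply]
    rw [hF.2.1 m hm m' hm', hG.2.1 _ (hF.1 m hm) _ (hF.1 m' hm')]
  · have hm : ρM oneB m ∈ actSpan ρM B := act_mem_actSpan hB.one_mem m
    have hf_one : ρN oneB (f (ρM oneB m)) = f (ρM oneB m) := by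
      rw [← hf.2.2.1 oneB hB.one_mem _ hm, ← hM.mul_smul, hB.mul_one oneB hB.one_mem]
    rw [Function.comp_apply, hF.2.2.2.2 x hx m, hG.2.2.2.2 x hx, hf_one, Function.comp_apply]

lemma IsInducedMap.eqOn_id {A X Xinv : AddSubgroup R} (hXA : X * Xinv = A) {oneB : R}
    (hX : ∀ x ∈ X, x * oneB = x)
    {ρM : R → M → M} {τM : M → S → M} (hM : IsBimodule R S M ρM τM) {I : M → M}
    (hI : IsInducedMap A oneB X ρM τM ρM τM id I) :
    Set.EqOn I id (actSpan ρM A) :=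
  hI.unique hXA hM (fun _ _ _ _ => rfl) fun x hx m => by
    rw [id, id, ← hM.mul_smul, hX x hx]

lemma IsInducedMap.eqOn_add {A X Xinv : AddSubgroup R} (hXA : X * Xinv = A) {oneB : R}
    {ρM : R → M → M} {τM : M → S → M} {ρN : R → N → N} {τN : N → S → N}
    (hM : IsBimodule R S M ρM τM) (hN : IsBimodule R S N ρN τN) {f f' F F' F'' : M → N}
    (hF : IsInducedMap A oneB X ρM τM ρN τN f F)
    (hF' : IsInducedMap A oneB X ρM τM ρN τN f' F')
    (hF'' : IsInducedMap A oneB X ρM τM ρN τN (fun m => f m + f' m) F'') :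
    Set.EqOn F'' (fun m => F m + F' m) (actSpan ρM A) := by
  refine hF''.unique hXA hM (fun m hm m' hm' => ?_) (fun x hx m => ?_)
  · rw [hF.2.1 m hm m' hm', hF'.2.1 m hm m' hm']
    abel
  · rw [hN.smul_add, hF.2.2.2.2 x hx m, hF'.2.2.2.2 x hx m]

end InducedMap

theorem inducedMap_comp_id_add_general {R S M N P : Type*} [NonUnitalRing R] [NonUnitalRing S]
    [AddCommGroup M] [AddCommGroup N] [AddCommGroup P]
    (A B : AddSubgroup R) (oneA oneB : R) (X Xinv : AddSubgroup R)
    (hX : IsInvertibleSubmodule A B oneA oneB X Xinv)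
    (ρM : R → M → M) (τM : M → S → M) (ρN : R → N → N) (τN : N → S → N)
    (ρP : R → P → P) (τP : P → S → P)
    (hM : IsBimodule R S M ρM τM) (hN : IsBimodule R S N ρN τN) :
    -- `(g ∘ f)^X = g^X ∘ f^X`
    (∀ (f : M → N) (g : N → P),
      IsHomBS B ρM τM ρN τN f → IsHomBS B ρN τN ρP τP g →
      ∀ (F : M → N) (G : N → P) (H : M → P),
        IsInducedMap A oneB X ρM τM ρN τN f F →
        IsInducedMap A oneB X ρN τN ρP τP g G →
        IsInducedMap A oneB X ρM τM ρP τP (g ∘ f) H →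
        Set.EqOn H (G ∘ F) (actSpan ρM A)) ∧
    -- `id^X = id`
    (∀ I : M → M, IsInducedMap A oneB X ρM τM ρM τM id I →
      Set.EqOn I id (actSpan ρM A)) ∧
    -- `(f + f')^X = f^X + f'^X`
    (∀ f f' : M → N,
      IsHomBS B ρM τM ρN τN f → IsHomBS B ρM τM ρN τN f' →
      ∀ F F' F'' : M → N,
        IsInducedMap A oneB X ρM τM ρN τN f F →
        IsInducedMap A oneB X ρM τM ρN τN f' F' →
        IsInducedMap A oneB X ρM τM ρN τN (fun m => f m + f' m) F'' →
        Set.EqOn F'' (fun m => F m + F' m) (actSpan ρM A)) :=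
  ⟨fun _ _ hf _ _ _ _ hF hG hH => IsInducedMap.eqOn_comp hX.mul_inv hX.unitalB hM hf hF hG hH,
    fun _ hI => hI.eqOn_id hX.mul_inv hX.smul_one hM,
    fun _ _ _ _ _ _ _ hF hF' hF'' => IsInducedMap.eqOn_add hX.mul_inv hM hN hF hF' hF''⟩

/-- The Miyashita induced-map assignment `f ↦ f^X` is compatible with
composition, identities and addition: `(g ∘ f)^X = g^X ∘ f^X`, `id^X = id`, and
`(f + f')^X = f^X + f'^X`, as maps on `AM`. -/
theorem inducedMap_comp_id_add {R S M N P : Type*} [NonUnitalRing R] [NonUnitalRing S]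
    [AddCommGroup M] [AddCommGroup N] [AddCommGroup P]
    (A B : AddSubgroup R) (oneA oneB : R) (X Xinv : AddSubgroup R)
    (hX : IsInvertibleSubmodule A B oneA oneB X Xinv)
    (ρM : R → M → M) (τM : M → S → M) (ρN : R → N → N) (τN : N → S → N)
    (ρP : R → P → P) (τP : P → S → P)
    (hM : IsBimodule R S M ρM τM) (hN : IsBimodule R S N ρN τN)
    (hP : IsBimodule R S P ρP τP) :
    -- `(g ∘ f)^X = g^X ∘ f^X`
    (∀ (f : M → N) (g : N → P),
      IsHomBS B ρM τM ρN τN f → IsHomBS B ρN τN ρP τP g →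
      ∀ (F : M → N) (G : N → P) (H : M → P),
        IsInducedMap A oneB X ρM τM ρN τN f F →
        IsInducedMap A oneB X ρN τN ρP τP g G →
        IsInducedMap A oneB X ρM τM ρP τP (g ∘ f) H →
        Set.EqOn H (G ∘ F) (actSpan ρM A)) ∧
    -- `id^X = id`
    (∀ I : M → M, IsInducedMap A oneB X ρM τM ρM τM id I →
      Set.EqOn I id (actSpan ρM A)) ∧
    -- `(f + f')^X = f^X + f'^X`
    (∀ f f' : M → N,
      IsHomBS B ρM τM ρN τN f → IsHomBS B ρM τM ρN τN f' →
      ∀ F F' F'' : M → N,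
        IsInducedMap A oneB X ρM τM ρN τN f F →
        IsInducedMap A oneB X ρM τM ρN τN f' F' →
        IsInducedMap A oneB X ρM τM ρN τN (fun m => f m + f' m) F'' →
        Set.EqOn F'' (fun m => F m + F' m) (actSpan ρM A)) :=
  inducedMap_comp_id_add_general A B oneA oneB X Xinv hX ρM τM ρN τN ρP τP hM hN
end

section
/- Under the same hypotheses, the isomorphisms σ^X are functorial: σ^A = id on C_{AR}(A), and for invertible submodules X : B → A and Y : C → B one has σ^{XY} = σ^X ∘ σ^Y. -/
open Pointwise

open Pointwise in
/-- The commutant `C_{AR}(A)`: elements of the subring `AR` (finite sums of products `a * r`)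
commuting with every element of `A`. -/
def commAR {R : Type*} [NonUnitalRing R] (A : AddSubgroup R) : Set R :=
  {r : R | r ∈ A * (⊤ : AddSubgroup R) ∧ ∀ a ∈ A, a * r = r * a}

/-- `σ` restricts to a ring isomorphism `C_{BR}(B) → C_{AR}(A)` intertwined by `X`:
`σ(r) x = x r` for all `r ∈ C_{BR}(B)` and `x ∈ X`. -/
def IsMiyashitaIso {R : Type*} [NonUnitalRing R] (A B : AddSubgroup R) (oneA oneB : R)
    (X : AddSubgroup R) (σ : R → R) : Prop :=
  Set.BijOn σ (commAR B) (commAR A) ∧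
  (∀ r ∈ commAR B, ∀ r' ∈ commAR B, σ (r + r') = σ r + σ r') ∧
  (∀ r ∈ commAR B, ∀ r' ∈ commAR B, σ (r * r') = σ r * σ r') ∧
  σ oneB = oneA ∧
  (∀ r ∈ commAR B, ∀ x ∈ X, σ r * x = x * r)

/-! A Miyashita isomorphism is pinned down by its intertwining property: an element `s` of
`C_{AR}(A)` satisfies `s = 1_A s = s 1_A`, and `1_A ∈ X X⁻¹`, so `s` is determined by the
products `s x`, `x ∈ X`. Both `σ^A r` and `r` intertwine `A` with itself, and both
`σ^{XY} r` and `σ^X (σ^Y r)` intertwine `XY`; agreement on `XY` gives agreement on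
`X = X (Y Y⁻¹)`. -/

section

variable {R : Type*} [NonUnitalRing R]

theorem one_mul_of_mem_mul_top {A : AddSubgroup R} {oneA : R} (h1 : ∀ a ∈ A, oneA * a = a)
    {r : R} (hr : r ∈ A * (⊤ : AddSubgroup R)) : oneA * r = r :=
  AddSubmonoid.mul_induction_on hr (fun a ha _ _ => by rw [← mul_assoc, h1 a ha])
    fun _ _ hs ht => by rw [mul_add, hs, ht]

theorem mul_eq_mul_of_mem_mul {S T : AddSubgroup R} {u v : R} (h : ∀ s ∈ S, u * s = v * s)
    {z : R} (hz : z ∈ S * T) : u * z = v * z :=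
  AddSubmonoid.mul_induction_on hz (fun s hs _ _ => by rw [← mul_assoc, ← mul_assoc, h s hs])
    fun _ _ hz hz' => by rw [mul_add, mul_add, hz, hz']

theorem mul_eq_mul_of_forall_mem_mul {X Y Yinv : AddSubgroup R} {oneB u v x : R}
    (hone : oneB ∈ Y * Yinv) (h : ∀ z ∈ X * Y, u * z = v * z) (hx : x ∈ X)
    (hx1 : x * oneB = x) : u * x = v * x := by
  have hxY : ∀ y ∈ Y, u * x * y = v * x * y := fun y hy => by
    simpa only [mul_assoc] using h _ (AddSubmonoid.mul_mem_mul hx hy)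
  have := mul_eq_mul_of_mem_mul hxY hone
  rwa [mul_assoc, mul_assoc, hx1] at this

theorem IsUnitalSubring.eq_of_mul_one_eq {A : AddSubgroup R} {oneA : R}
    (hA : IsUnitalSubring A oneA) {s s' : R} (hs : s ∈ commAR A) (hs' : s' ∈ commAR A)
    (h : s * oneA = s' * oneA) : s = s' :=
  calc s = oneA * s := (one_mul_of_mem_mul_top hA.one_mul hs.1).symm
    _ = s * oneA := hs.2 oneA hA.one_mem
    _ = s' * oneA := h
    _ = oneA * s' := (hs'.2 oneA hA.one_mem).symm
    _ = s' := one_mul_of_mem_mul_top hA.one_mul hs'.1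

namespace IsInvertibleSubmodule

variable {A B X Xinv : AddSubgroup R} {oneA oneB : R}

theorem one_mem_mul_inv (hX : IsInvertibleSubmodule A B oneA oneB X Xinv) : oneA ∈ X * Xinv :=
  hX.mul_inv ▸ hX.unitalA.one_mem

theorem eq_of_forall_mul_eq (hX : IsInvertibleSubmodule A B oneA oneB X Xinv) {s s' : R}
    (hs : s ∈ commAR A) (hs' : s' ∈ commAR A) (h : ∀ x ∈ X, s * x = s' * x) : s = s' :=
  hX.unitalA.eq_of_mul_one_eq hs hs' (mul_eq_mul_of_mem_mul h hX.one_mem_mul_inv)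

end IsInvertibleSubmodule

namespace IsMiyashitaIso

variable {A B C X Y : AddSubgroup R} {oneA oneB oneC : R} {σ σX σY : R → R}

theorem mapsTo (hσ : IsMiyashitaIso A B oneA oneB X σ) : Set.MapsTo σ (commAR B) (commAR A) :=
  hσ.1.1

theorem mul_eq_mul (hσ : IsMiyashitaIso A B oneA oneB X σ) {r x : R} (hr : r ∈ commAR B)
    (hx : x ∈ X) : σ r * x = x * r :=
  hσ.2.2.2.2 r hr x hx

theorem comp_mul_eq_mul (hσX : IsMiyashitaIso A B oneA oneB X σX)
    (hσY : IsMiyashitaIso B C oneB oneC Y σY) {r z : R} (hr : r ∈ commAR C) (hz : z ∈ X * Y) :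
    σX (σY r) * z = z * r :=
  AddSubmonoid.mul_induction_on hz
    (fun x hx y hy => by
      rw [← mul_assoc, hσX.mul_eq_mul (hσY.mapsTo hr) hx, mul_assoc, hσY.mul_eq_mul hr hy,
        ← mul_assoc])
    fun _ _ hs ht => by rw [mul_add, hs, ht, add_mul]

end IsMiyashitaIso

end

/-- Functoriality of the Miyashita isomorphisms: `σ^A = id` on `C_{AR}(A)`,
and `σ^{XY} = σ^X ∘ σ^Y` on `C_{CR}(C)`. -/
theorem miyashitaIso_functorial {R : Type*} [NonUnitalRing R]
    (A B C : AddSubgroup R) (oneA oneB oneC : R) (X Xinv Y Yinv : AddSubgroup R)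
    (hX : IsInvertibleSubmodule A B oneA oneB X Xinv)
    (hY : IsInvertibleSubmodule B C oneB oneC Y Yinv)
    (σA σX σY σXY : R → R)
    (hσA : IsMiyashitaIso A A oneA oneA A σA)
    (hσX : IsMiyashitaIso A B oneA oneB X σX)
    (hσY : IsMiyashitaIso B C oneB oneC Y σY)
    (hσXY : IsMiyashitaIso A C oneA oneC (X * Y) σXY) :
    Set.EqOn σA id (commAR A) ∧ Set.EqOn σXY (σX ∘ σY) (commAR C) := by
  refine ⟨fun r hr => ?_, fun r hr => ?_⟩
  · have hone := hX.unitalA.one_mem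
    exact hX.unitalA.eq_of_mul_one_eq (hσA.mapsTo hr) hr
      ((hσA.mul_eq_mul hr hone).trans (hr.2 oneA hone))
  · refine hX.eq_of_forall_mul_eq (hσXY.mapsTo hr) (hσX.mapsTo (hσY.mapsTo hr)) fun x hx => ?_
    refine mul_eq_mul_of_forall_mem_mul hY.one_mem_mul_inv (fun z hz => ?_) hx (hX.smul_one x hx)
    exact (hσXY.mul_eq_mul hr hz).trans (hσX.comp_mul_eq_mul hσY hr hz).symm
end

section
/- Let R be a ring, A and B unital subrings, and X an invertible A-B-submodule of R. Then there is a unique ring isomorphism σ^X : Z(B) → Z(A) between the centers of B and A satisfying σ^X(r) x = x r for all r in Z(B) and x in X. -/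
/-!
Writing `oneA = ∑ xᵢ yᵢ` with `xᵢ ∈ X`, `yᵢ ∈ X⁻¹`, the element `σ r = ∑ xᵢ r yᵢ` satisfies
`σ r x = ∑ xᵢ (yᵢ x) r = x r`, because each `yᵢ x` lies in `B` and so commutes with `r`. An element
of `A` is determined by its left action on `X`, since anything killing `X` kills `X X⁻¹ = A ∋ oneA`;
this gives uniqueness, and `σ` respects sums and products. The same relation read from the other
side, `r y = y σ r` for `y ∈ X⁻¹`, is the one defining `σ` for the inverse `B`-`A`-submodule `X⁻¹`,
so `σ^{X⁻¹}` is an inverse of `σ^X` on the centers.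
-/

open Pointwise

/-- The center `Z(A)` of a subring `A` of `R`. -/
def centerOf {R : Type*} [NonUnitalRing R] (A : AddSubgroup R) : Set R :=
  {a : R | a ∈ A ∧ ∀ b ∈ A, a * b = b * a}

/-- `σ` restricts to a ring isomorphism `Z(B) → Z(A)` intertwined by `X`. -/
def IsCenterIso {R : Type*} [NonUnitalRing R] (A B : AddSubgroup R) (oneA oneB : R)
    (X : AddSubgroup R) (σ : R → R) : Prop :=
  Set.BijOn σ (centerOf B) (centerOf A) ∧
  (∀ r ∈ centerOf B, ∀ r' ∈ centerOf B, σ (r + r') = σ r + σ r') ∧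
  (∀ r ∈ centerOf B, ∀ r' ∈ centerOf B, σ (r * r') = σ r * σ r') ∧
  σ oneB = oneA ∧
  (∀ r ∈ centerOf B, ∀ x ∈ X, σ r * x = x * r)

section

variable {R : Type*} [NonUnitalRing R]

namespace AddSubgroup

theorem mul_mem_mul {M N : AddSubgroup R} {m n : R} (hm : m ∈ M) (hn : n ∈ N) :
    m * n ∈ M * N :=
  AddSubmonoid.mul_mem_mul hm hn

theorem mul_induction_on {M N : AddSubgroup R} {C : R → Prop} {r : R} (hr : r ∈ M * N)
    (hmul : ∀ m ∈ M, ∀ n ∈ N, C (m * n)) (hadd : ∀ x y, C x → C y → C (x + y)) : C r :=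
  AddSubmonoid.mul_induction_on hr hmul hadd

end AddSubgroup

theorem add_mem_centerOf {B : AddSubgroup R} {r r' : R} (hr : r ∈ centerOf B)
    (hr' : r' ∈ centerOf B) : r + r' ∈ centerOf B :=
  ⟨B.add_mem hr.1 hr'.1, fun b hb => by rw [add_mul, mul_add, hr.2 b hb, hr'.2 b hb]⟩

theorem IsUnitalSubring.mul_mem_centerOf {B : AddSubgroup R} {oneB r r' : R}
    (hB : IsUnitalSubring B oneB) (hr : r ∈ centerOf B) (hr' : r' ∈ centerOf B) :
    r * r' ∈ centerOf B :=
  ⟨hB.mul_mem hr.1 hr'.1, fun b hb => by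
    rw [mul_assoc, hr'.2 b hb, ← mul_assoc, hr.2 b hb, mul_assoc]⟩

theorem IsUnitalSubring.one_mem_centerOf {B : AddSubgroup R} {oneB : R}
    (hB : IsUnitalSubring B oneB) : oneB ∈ centerOf B :=
  ⟨hB.one_mem, fun b hb => by rw [hB.one_mul b hb, hB.mul_one b hb]⟩

def Intertwines (X : AddSubgroup R) (a r : R) : Prop :=
  ∀ x ∈ X, a * x = x * r

theorem Intertwines.add {X : AddSubgroup R} {a a' r r' : R} (har : Intertwines X a r)
    (har' : Intertwines X a' r') : Intertwines X (a + a') (r + r') := fun x hx => by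
  rw [add_mul, har x hx, har' x hx, mul_add]

theorem Intertwines.mul {X : AddSubgroup R} {a a' r r' : R} (har : Intertwines X a r)
    (har' : Intertwines X a' r') (hX : ∀ x ∈ X, x * r' ∈ X) :
    Intertwines X (a * a') (r' * r) := fun x hx => by
  rw [mul_assoc, har' x hx, har _ (hX x hx), mul_assoc]

namespace IsInvertibleSubmodule

variable {A B X Xinv : AddSubgroup R} {oneA oneB : R}

theorem symm (h : IsInvertibleSubmodule A B oneA oneB X Xinv) :
    IsInvertibleSubmodule B A oneB oneA Xinv X where
  unitalA := h.unitalB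
  unitalB := h.unitalA
  smul_mem := h.smul_mem'
  mem_smul := h.mem_smul'
  one_smul := h.one_smul'
  smul_one := h.smul_one'
  smul_mem' := h.smul_mem
  mem_smul' := h.mem_smul
  one_smul' := h.one_smul
  smul_one' := h.smul_one
  mul_inv := h.inv_mul
  inv_mul := h.mul_inv

theorem mul_mem (h : IsInvertibleSubmodule A B oneA oneB X Xinv) {x y : R} (hx : x ∈ X)
    (hy : y ∈ Xinv) : x * y ∈ A :=
  h.mul_inv ▸ AddSubgroup.mul_mem_mul hx hy

theorem induction_on (h : IsInvertibleSubmodule A B oneA oneB X Xinv) {C : R → Prop} {c : R}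
    (hc : c ∈ A) (hmul : ∀ x ∈ X, ∀ y ∈ Xinv, C (x * y)) (hadd : ∀ c c', C c → C c' → C (c + c')) :
    C c :=
  AddSubgroup.mul_induction_on (h.mul_inv.symm ▸ hc) hmul hadd

theorem eq_zero_of_forall_mul_eq_zero (h : IsInvertibleSubmodule A B oneA oneB X Xinv) {d : R}
    (hd : d * oneA = d) (hdX : ∀ x ∈ X, d * x = 0) : d = 0 := by
  rw [← hd]
  refine h.induction_on (C := fun c => d * c = 0) h.unitalA.one_mem (fun x hx y _ => ?_)
    fun c c' hc hc' => ?_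
  · rw [← mul_assoc, hdX x hx, zero_mul]
  · rw [mul_add, hc, hc', add_zero]

theorem eq_of_intertwines (h : IsInvertibleSubmodule A B oneA oneB X Xinv) {a a' r : R}
    (ha : a ∈ A) (ha' : a' ∈ A) (har : Intertwines X a r) (ha'r : Intertwines X a' r) :
    a = a' :=
  sub_eq_zero.1 <| h.eq_zero_of_forall_mul_eq_zero (h.unitalA.mul_one _ (A.sub_mem ha ha'))
    fun x hx => by rw [sub_mul, har x hx, ha'r x hx, sub_self]

theorem exists_intertwines (h : IsInvertibleSubmodule A B oneA oneB X Xinv) {r : R}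
    (hr : r ∈ centerOf B) : ∃ a ∈ A, Intertwines X a r := by
  suffices ∀ c ∈ A, ∃ a ∈ A, ∀ x ∈ X, a * x = c * (x * r) by
    obtain ⟨a, ha, hax⟩ := this oneA h.unitalA.one_mem
    exact ⟨a, ha, fun x hx => by rw [hax x hx, h.one_smul _ (h.mem_smul hx hr.1)]⟩
  intro c hc
  refine h.induction_on (C := fun c => ∃ a ∈ A, ∀ x ∈ X, a * x = c * (x * r)) hc
    (fun x₀ hx₀ y₀ hy₀ => ⟨x₀ * r * y₀, h.mul_mem (h.mem_smul hx₀ hr.1) hy₀, fun x hx => ?_⟩) ?_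
  · calc x₀ * r * y₀ * x = x₀ * (r * (y₀ * x)) := by simp only [mul_assoc]
      _ = x₀ * (y₀ * x * r) := by rw [hr.2 _ (h.symm.mul_mem hy₀ hx)]
      _ = x₀ * y₀ * (x * r) := by simp only [mul_assoc]
  · rintro c₁ c₂ ⟨a₁, ha₁, he₁⟩ ⟨a₂, ha₂, he₂⟩
    exact ⟨a₁ + a₂, A.add_mem ha₁ ha₂, fun x hx => by
      rw [add_mul, he₁ x hx, he₂ x hx, ← add_mul]⟩

theorem intertwines_inv (h : IsInvertibleSubmodule A B oneA oneB X Xinv) {a r : R} (ha : a ∈ A)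
    (hr : r ∈ centerOf B) (har : Intertwines X a r) : Intertwines Xinv r a := by
  intro y hy
  have hmem : y * a - r * y ∈ Xinv := Xinv.sub_mem (h.mem_smul' hy ha) (h.smul_mem' hr.1 hy)
  refine (sub_eq_zero.1 <| h.eq_zero_of_forall_mul_eq_zero (h.smul_one' _ hmem) fun x hx => ?_).symm
  rw [sub_mul, mul_assoc, har x hx, ← mul_assoc, mul_assoc r, ← hr.2 _ (h.symm.mul_mem hy hx),
    ← mul_assoc, sub_self]

theorem mem_centerOf_of_intertwines (h : IsInvertibleSubmodule A B oneA oneB X Xinv) {a r : R}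
    (ha : a ∈ A) (hr : r ∈ centerOf B) (har : Intertwines X a r) : a ∈ centerOf A := by
  refine ⟨ha, fun c hc => h.induction_on (C := fun c => a * c = c * a) hc
    (fun x hx y hy => ?_) fun c c' hc hc' => ?_⟩
  · rw [← mul_assoc, har x hx, mul_assoc, h.intertwines_inv ha hr har y hy, ← mul_assoc]
  · rw [mul_add, add_mul, hc, hc']

theorem exists_mem_centerOf_intertwines (h : IsInvertibleSubmodule A B oneA oneB X Xinv) {r : R}
    (hr : r ∈ centerOf B) : ∃ a ∈ centerOf A, Intertwines X a r :=
  let ⟨a, ha, har⟩ := h.exists_intertwines hr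
  ⟨a, h.mem_centerOf_of_intertwines ha hr har, har⟩

theorem intertwines_iff (h : IsInvertibleSubmodule A B oneA oneB X Xinv) {a r : R}
    (ha : a ∈ centerOf A) (hr : r ∈ centerOf B) : Intertwines X a r ↔ Intertwines Xinv r a :=
  ⟨h.intertwines_inv ha.1 hr, h.symm.intertwines_inv hr.1 ha⟩

open Classical in
noncomputable def centerMap (h : IsInvertibleSubmodule A B oneA oneB X Xinv) (r : R) : R :=
  if hr : r ∈ centerOf B then (h.exists_mem_centerOf_intertwines hr).choose else 0

theorem centerMap_mem (h : IsInvertibleSubmodule A B oneA oneB X Xinv) {r : R}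
    (hr : r ∈ centerOf B) : h.centerMap r ∈ centerOf A := by
  rw [centerMap, dif_pos hr]
  exact (h.exists_mem_centerOf_intertwines hr).choose_spec.1

theorem intertwines_centerMap (h : IsInvertibleSubmodule A B oneA oneB X Xinv) {r : R}
    (hr : r ∈ centerOf B) : Intertwines X (h.centerMap r) r := by
  rw [centerMap, dif_pos hr]
  exact (h.exists_mem_centerOf_intertwines hr).choose_spec.2

theorem centerMap_eq_of_intertwines (h : IsInvertibleSubmodule A B oneA oneB X Xinv) {a r : R}
    (hr : r ∈ centerOf B) (ha : a ∈ A) (har : Intertwines X a r) : h.centerMap r = a :=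
  h.eq_of_intertwines (h.centerMap_mem hr).1 ha (h.intertwines_centerMap hr) har

theorem isCenterIso_centerMap (h : IsInvertibleSubmodule A B oneA oneB X Xinv) :
    IsCenterIso A B oneA oneB X h.centerMap := by
  have hσ : ∀ {r}, r ∈ centerOf B → Intertwines X (h.centerMap r) r :=
    h.intertwines_centerMap
  refine ⟨⟨fun r hr => h.centerMap_mem hr, fun r hr r' hr' hrr' => ?_, fun a ha => ?_⟩,
    fun r hr r' hr' => ?_, fun r hr r' hr' => ?_, ?_, fun r hr => hσ hr⟩
  · have hinv := (h.intertwines_iff (h.centerMap_mem hr') hr').1 (hσ hr')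
    rw [← hrr'] at hinv
    exact h.symm.eq_of_intertwines hr.1 hr'.1 ((h.intertwines_iff (h.centerMap_mem hr) hr).1
      (hσ hr)) hinv
  · obtain ⟨r, hr, hra⟩ := h.symm.exists_mem_centerOf_intertwines ha
    exact ⟨r, hr, h.centerMap_eq_of_intertwines hr ha.1 ((h.intertwines_iff ha hr).2 hra)⟩
  · exact h.centerMap_eq_of_intertwines (add_mem_centerOf hr hr')
      (A.add_mem (h.centerMap_mem hr).1 (h.centerMap_mem hr').1) ((hσ hr).add (hσ hr'))
  · refine h.centerMap_eq_of_intertwines (h.unitalB.mul_mem_centerOf hr hr')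
      (h.unitalA.mul_mem (h.centerMap_mem hr).1 (h.centerMap_mem hr').1) ?_
    rw [hr.2 r' hr'.1]
    exact (hσ hr).mul (hσ hr') fun x hx => h.mem_smul hx hr'.1
  · exact h.centerMap_eq_of_intertwines h.unitalB.one_mem_centerOf h.unitalA.one_mem
      fun x hx => by
      rw [h.one_smul x hx, h.smul_one x hx]

end IsInvertibleSubmodule

end

/-- For an invertible `A`-`B`-submodule `X` of `R` there is a unique ring
isomorphism `σ^X : Z(B) → Z(A)` satisfying `σ^X(r) x = x r` for all `r ∈ Z(B)`, `x ∈ X`. -/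
theorem exists_unique_centerIso {R : Type*} [NonUnitalRing R]
    (A B : AddSubgroup R) (oneA oneB : R) (X Xinv : AddSubgroup R)
    (h : IsInvertibleSubmodule A B oneA oneB X Xinv) :
    ∃ σ : R → R, IsCenterIso A B oneA oneB X σ ∧
      ∀ σ' : R → R, IsCenterIso A B oneA oneB X σ' →
        Set.EqOn σ' σ (centerOf B) :=
  ⟨h.centerMap, h.isCenterIso_centerMap, fun _ hσ' r hr =>
    (h.centerMap_eq_of_intertwines hr (hσ'.1.1 hr).1 (hσ'.2.2.2.2 r hr)).symm⟩
end

section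
/- Let R be a locally unital ring strongly graded by a groupoid G. Then for every s in G, the component R_s is finitely generated and projective both as a left R_{c(s)}-module and as a right R_{d(s)}-module. -/
open Pointwise CategoryTheory

/-- A locally unital ring `R` graded by a small category `G` (with object type `Obj`):
`R = ⊕_{s ∈ mor(G)} R_s`, `R_s R_t ⊆ R_{st}` for composable pairs, `R_s R_t = 0` for
non-composable pairs, and each identity component `R_e` is a unital ring, every `R_s` being
a unital `R_{c(s)}`-`R_{d(s)}`-bimodule. -/
structure CatGradedRing (Obj : Type*) [Category Obj] (R : Type*) [NonUnitalRing R] where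
  /-- the homogeneous component `R_s` -/
  deg : ∀ {e f : Obj}, (e ⟶ f) → AddSubgroup R
  /-- `R` is the internal direct sum of the components -/
  isInternal :
    letI := Classical.decEq (Σ e f : Obj, e ⟶ f)
    DirectSum.IsInternal (fun s : Σ e f : Obj, e ⟶ f => deg s.2.2)
  /-- `R_s R_t ⊆ R_{st}` whenever `d(s) = c(t)` -/
  mul_le : ∀ {e f g : Obj} (s : f ⟶ g) (t : e ⟶ f), deg s * deg t ≤ deg (t ≫ s)
  /-- `R_s R_t = 0` for non-composable pairs -/
  mul_eq_bot : ∀ {e f x y : Obj} (s : e ⟶ f) (t : x ⟶ y), y ≠ e → deg s * deg t = ⊥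
  /-- the local unit `1_{R_e}` -/
  unit : Obj → R
  unit_mem : ∀ e : Obj, unit e ∈ deg (𝟙 e)
  unit_mul : ∀ {e f : Obj} (s : e ⟶ f), ∀ x ∈ deg s, unit f * x = x
  mul_unit : ∀ {e f : Obj} (s : e ⟶ f), ∀ x ∈ deg s, x * unit e = x

/-- The grading is strong: `R_s R_t = R_{st}` for all composable pairs. -/
def CatGradedRing.IsStrong {Obj : Type*} [Category Obj] {R : Type*} [NonUnitalRing R]
    (g : CatGradedRing Obj R) : Prop :=
  ∀ {e f h : Obj} (s : f ⟶ h) (t : e ⟶ f), g.deg s * g.deg t = g.deg (t ≫ s)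

namespace CatGradedRing

variable {Obj : Type*} [Category Obj] {R : Type*} [NonUnitalRing R] (g : CatGradedRing Obj R)

theorem mul_mem {e f h : Obj} (s : f ⟶ h) (t : e ⟶ f) {a b : R}
    (ha : a ∈ g.deg s) (hb : b ∈ g.deg t) : a * b ∈ g.deg (t ≫ s) :=
  g.mul_le s t (AddSubmonoid.mul_mem_mul ha hb)

theorem mul_mem_id {e : Obj} {a b : R} (ha : a ∈ g.deg (𝟙 e)) (hb : b ∈ g.deg (𝟙 e)) :
    a * b ∈ g.deg (𝟙 e) := by
  simpa using g.mul_mem (𝟙 e) (𝟙 e) ha hb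

/-- The ring structure on the identity component `R_e`. -/
def idRing (e : Obj) : Ring ↥(g.deg (𝟙 e)) :=
  { (inferInstance : AddCommGroup ↥(g.deg (𝟙 e))) with
    mul := fun a b => ⟨a.1 * b.1, g.mul_mem_id a.2 b.2⟩
    one := ⟨g.unit e, g.unit_mem e⟩
    mul_assoc := fun a b c => Subtype.ext (mul_assoc a.1 b.1 c.1)
    one_mul := fun a => Subtype.ext (g.unit_mul (𝟙 e) a.1 a.2)
    mul_one := fun a => Subtype.ext (g.mul_unit (𝟙 e) a.1 a.2)
    left_distrib := fun a b c => Subtype.ext (mul_add a.1 b.1 c.1)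
    right_distrib := fun a b c => Subtype.ext (add_mul a.1 b.1 c.1)
    zero_mul := fun a => Subtype.ext (zero_mul a.1)
    mul_zero := fun a => Subtype.ext (mul_zero a.1) }

theorem smul_mem_deg {e f : Obj} (s : e ⟶ f) {a x : R}
    (ha : a ∈ g.deg (𝟙 f)) (hx : x ∈ g.deg s) : a * x ∈ g.deg s := by
  simpa using g.mul_mem (𝟙 f) s ha hx

theorem mem_deg_smul {e f : Obj} (s : e ⟶ f) {x b : R}
    (hx : x ∈ g.deg s) (hb : b ∈ g.deg (𝟙 e)) : x * b ∈ g.deg s := by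
  simpa using g.mul_mem s (𝟙 e) hx hb

/-- The left `R_{c(s)}`-module structure on `R_s`. -/
def leftModule {e f : Obj} (s : e ⟶ f) :
    letI := g.idRing f
    Module ↥(g.deg (𝟙 f)) ↥(g.deg s) := by
  letI := g.idRing f
  exact
  { smul := fun a x => ⟨a.1 * x.1, g.smul_mem_deg s a.2 x.2⟩
    one_smul := fun x => Subtype.ext (g.unit_mul s x.1 x.2)
    mul_smul := fun a a' x => Subtype.ext (mul_assoc a.1 a'.1 x.1)
    smul_zero := fun a => Subtype.ext (mul_zero a.1)
    smul_add := fun a x y => Subtype.ext (mul_add a.1 x.1 y.1)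
    add_smul := fun a a' x => Subtype.ext (add_mul a.1 a'.1 x.1)
    zero_smul := fun x => Subtype.ext (zero_mul x.1) }

/-- The right `R_{d(s)}`-module structure on `R_s`, as a module over the opposite ring. -/
def rightModule {e f : Obj} (s : e ⟶ f) :
    letI := g.idRing e
    Module (↥(g.deg (𝟙 e)))ᵐᵒᵖ ↥(g.deg s) := by
  letI := g.idRing e
  exact
  { smul := fun b x => ⟨x.1 * b.unop.1, g.mem_deg_smul s x.2 b.unop.2⟩
    one_smul := fun x => Subtype.ext (g.mul_unit s x.1 x.2)
    mul_smul := fun b b' x => Subtype.ext (mul_assoc x.1 b'.unop.1 b.unop.1).symm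
    smul_zero := fun b => Subtype.ext (zero_mul b.unop.1)
    smul_add := fun b x y => Subtype.ext (add_mul x.1 y.1 b.unop.1)
    add_smul := fun b b' x => Subtype.ext (mul_add x.1 b.unop.1 b'.unop.1)
    zero_smul := fun x => Subtype.ext (mul_zero x.1) }

end CatGradedRing

/-!
Strongness gives `R_{s⁻¹} R_s = R_{d(s)}`, so `1_{d(s)} = ∑ vᵢ uᵢ` with `vᵢ ∈ R_{s⁻¹}`, `uᵢ ∈ R_s`.
Then `x = ∑ (x vᵢ) uᵢ` for every `x ∈ R_s`, with `x vᵢ ∈ R_{c(s)}`: the `uᵢ` together with the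
`R_{c(s)}`-linear functionals `x ↦ x vᵢ` form a finite dual basis of `R_s`. Symmetrically,
`1_{c(s)} = ∑ uᵢ vᵢ` gives a dual basis of `R_s` as a right `R_{d(s)}`-module.
-/

theorem AddSubmonoid.exists_fin_sum_eq_of_mem_mul {R : Type*} [NonUnitalNonAssocSemiring R]
    {M N : AddSubmonoid R} {x : R} (hx : x ∈ M * N) :
    ∃ (n : ℕ) (u v : Fin n → R), (∀ i, u i ∈ M) ∧ (∀ i, v i ∈ N) ∧ ∑ i, u i * v i = x := by
  refine AddSubmonoid.mul_induction_on hx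
    (fun m hm n hn => ⟨1, fun _ => m, fun _ => n, fun _ => hm, fun _ => hn, by simp⟩) ?_
  rintro _ _ ⟨n₁, u₁, v₁, hu₁, hv₁, rfl⟩ ⟨n₂, u₂, v₂, hu₂, hv₂, rfl⟩
  exact ⟨n₁ + n₂, Fin.append u₁ u₂, Fin.append v₁ v₂, Fin.addCases (by simpa) (by simpa),
    Fin.addCases (by simpa) (by simpa), by simp [Fin.sum_univ_add]⟩

theorem Module.finite_and_projective_of_dual_basis {A P ι : Type*} [Semiring A]
    [AddCommMonoid P] [Module A P] [Fintype ι] (x : ι → P) (φ : ι → P →ₗ[A] A)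
    (h : ∀ p, ∑ i, φ i p • x i = p) : Module.Finite A P ∧ Module.Projective A P := by
  have hsplit : Fintype.linearCombination A x ∘ₗ LinearMap.pi φ = LinearMap.id := LinearMap.ext h
  exact ⟨.of_surjective _ (LinearMap.surjective_of_comp_eq_id _ _ hsplit),
    .of_split _ _ hsplit⟩

namespace CatGradedRing

variable {Obj : Type*} [Category Obj] {R : Type*} [NonUnitalRing R] (g : CatGradedRing Obj R)

attribute [local instance] idRing leftModule rightModule

theorem IsStrong.unit_mem_mul {g : CatGradedRing Obj R} (hstr : g.IsStrong) {e f : Obj}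
    (s : e ⟶ f) (t : f ⟶ e) (hst : s ≫ t = 𝟙 e) : g.unit e ∈ g.deg t * g.deg s := by
  rw [hstr t s, hst]
  exact g.unit_mem e

def mulRightₗ {e f : Obj} (s : e ⟶ f) {t : f ⟶ e} (hts : t ≫ s = 𝟙 f) {y : R}
    (hy : y ∈ g.deg t) : g.deg s →ₗ[g.deg (𝟙 f)] g.deg (𝟙 f) where
  toFun x := ⟨x * y, hts ▸ g.mul_mem s t x.2 hy⟩
  map_add' x x' := Subtype.ext (add_mul x.1 x'.1 y)
  map_smul' a x := Subtype.ext (mul_assoc a.1 x.1 y)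

def mulLeftₗ {e f : Obj} (s : e ⟶ f) {t : f ⟶ e} (hst : s ≫ t = 𝟙 e) {y : R}
    (hy : y ∈ g.deg t) : g.deg s →ₗ[(g.deg (𝟙 e))ᵐᵒᵖ] (g.deg (𝟙 e))ᵐᵒᵖ where
  toFun x := .op ⟨y * x, hst ▸ g.mul_mem t s hy x.2⟩
  map_add' x x' := congrArg MulOpposite.op (Subtype.ext (mul_add y x.1 x'.1))
  map_smul' b x := congrArg MulOpposite.op (Subtype.ext (mul_assoc y x.1 b.unop.1).symm)

theorem finite_and_projective_deg_left {e f : Obj} (s : e ⟶ f) (t : f ⟶ e) (hts : t ≫ s = 𝟙 f)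
    (hunit : g.unit e ∈ g.deg t * g.deg s) :
    Module.Finite (g.deg (𝟙 f)) (g.deg s) ∧ Module.Projective (g.deg (𝟙 f)) (g.deg s) := by
  obtain ⟨n, v, u, hv, hu, hsum⟩ := AddSubmonoid.exists_fin_sum_eq_of_mem_mul hunit
  refine Module.finite_and_projective_of_dual_basis (fun i => ⟨u i, hu i⟩)
    (fun i => g.mulRightₗ s hts (hv i)) fun x => Subtype.ext ?_
  calc ((∑ i, g.mulRightₗ s hts (hv i) x • ⟨u i, hu i⟩ : g.deg s) : R)
      = x * ∑ i, v i * u i := by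
        simp only [AddSubgroup.val_finsetSum, Finset.mul_sum, ← mul_assoc]; rfl
    _ = x := by rw [hsum, g.mul_unit s x x.2]

theorem finite_and_projective_deg_right {e f : Obj} (s : e ⟶ f) (t : f ⟶ e) (hst : s ≫ t = 𝟙 e)
    (hunit : g.unit f ∈ g.deg s * g.deg t) :
    Module.Finite (g.deg (𝟙 e))ᵐᵒᵖ (g.deg s) ∧ Module.Projective (g.deg (𝟙 e))ᵐᵒᵖ (g.deg s) := by
  obtain ⟨n, u, v, hu, hv, hsum⟩ := AddSubmonoid.exists_fin_sum_eq_of_mem_mul hunit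
  refine Module.finite_and_projective_of_dual_basis (fun i => ⟨u i, hu i⟩)
    (fun i => g.mulLeftₗ s hst (hv i)) fun x => Subtype.ext ?_
  calc ((∑ i, g.mulLeftₗ s hst (hv i) x • ⟨u i, hu i⟩ : g.deg s) : R)
      = (∑ i, u i * v i) * x := by
        simp only [AddSubgroup.val_finsetSum, Finset.sum_mul, mul_assoc]; rfl
    _ = x := by rw [hsum, g.unit_mul s x x.2]

end CatGradedRing

/-- In a locally unital ring strongly graded by a groupoid, every
homogeneous component `R_s` is finitely generated and projective both as a left
`R_{c(s)}`-module and as a right `R_{d(s)}`-module. -/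
theorem catGradedRing_component_finite_projective {Obj : Type*} [Groupoid Obj]
    {R : Type*} [NonUnitalRing R] (g : CatGradedRing Obj R) (hstr : g.IsStrong)
    {e f : Obj} (s : e ⟶ f) :
    (letI := g.idRing f
     letI := g.leftModule s
     Module.Finite ↥(g.deg (𝟙 f)) ↥(g.deg s) ∧
       Module.Projective ↥(g.deg (𝟙 f)) ↥(g.deg s)) ∧
    (letI := g.idRing e
     letI := g.rightModule s
     Module.Finite (↥(g.deg (𝟙 e)))ᵐᵒᵖ ↥(g.deg s) ∧
       Module.Projective (↥(g.deg (𝟙 e)))ᵐᵒᵖ ↥(g.deg s)) := by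
  refine ⟨?_, ?_⟩
  · exact g.finite_and_projective_deg_left s (Groupoid.inv s) (by simp)
      (hstr.unit_mem_mul s _ (by simp))
  · exact g.finite_and_projective_deg_right s (Groupoid.inv s) (by simp)
      (hstr.unit_mem_mul _ s (by simp))
end

section
/- Let R be a locally unital ring graded by a category G. Then R is unital if and only if R = ⊕_{s∈H} R_s for some subcategory H of G with finitely many objects; moreover H may be chosen so that 1_{R_e} ≠ 0 for all objects e of H. -/
open Pointwise CategoryTheory

/-- A subcategory of the category with object type `Obj`. -/
structure Subcat (Obj : Type*) [Category Obj] where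
  objs : Set Obj
  homs : ∀ e f : Obj, Set (e ⟶ f)
  id_mem : ∀ e ∈ objs, 𝟙 e ∈ homs e e
  comp_mem : ∀ {e f h : Obj} (s : e ⟶ f) (t : f ⟶ h), s ∈ homs e f → t ∈ homs f h → s ≫ t ∈ homs e h
  dom_mem : ∀ {e f : Obj} (s : e ⟶ f), s ∈ homs e f → e ∈ objs
  cod_mem : ∀ {e f : Obj} (s : e ⟶ f), s ∈ homs e f → f ∈ objs

/-- The homogeneous subring `R_H` corresponding to a subcategory `H`. -/
def Subcat.part {Obj : Type*} [Category Obj] {R : Type*} [NonUnitalRing R]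
    (H : Subcat Obj) (g : CatGradedRing Obj R) : AddSubgroup R :=
  ⨆ (e : Obj) (f : Obj) (s : e ⟶ f) (_ : s ∈ H.homs e f), g.deg s

/-!
If `u` is an identity of `R`, it has finitely many nonzero homogeneous components, and
`1_e = u * 1_e ≠ 0` forces `e` to be the source of one of them; so only finitely many objects
have a nonzero local unit. A nonzero `x ∈ R_s` with `s : e ⟶ f` satisfies `x = 1_f x = x 1_e`, so
the full subcategory on these objects carries all of `R`. Conversely, if `R = R_H` with `H` having
finitely many objects, `∑_{e ∈ H} 1_e` is an identity on every `R_s` with `s ∈ H`.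
-/

namespace CatGradedRing

variable {Obj : Type*} [Category Obj] {R : Type*} [NonUnitalRing R] (g : CatGradedRing Obj R)

theorem iSup_deg_eq_top : ⨆ s : Σ e f : Obj, e ⟶ f, g.deg s.2.2 = ⊤ := by
  let := Classical.decEq (Σ e f : Obj, e ⟶ f)
  have h := DirectSum.IsInternal.addSubmonoid_iSup_eq_top
    (fun s : Σ e f : Obj, e ⟶ f => (g.deg s.2.2).toAddSubmonoid) g.isInternal
  refine eq_top_iff.2 fun r _ => ?_
  have hr : r ∈ ⨆ s : Σ e f : Obj, e ⟶ f, (g.deg s.2.2).toAddSubmonoid := h ▸ trivial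
  exact (iSup_le fun s => AddSubgroup.toAddSubmonoid_mono (le_iSup _ s) :
    _ ≤ (⨆ s : Σ e f : Obj, e ⟶ f, g.deg s.2.2).toAddSubmonoid) hr

theorem mul_eq_zero_of_ne {e f x y : Obj} {s : e ⟶ f} {t : x ⟶ y} (h : y ≠ e) {a b : R}
    (ha : a ∈ g.deg s) (hb : b ∈ g.deg t) : a * b = 0 := by
  have hab : a * b ∈ g.deg s * g.deg t := AddSubmonoid.mul_mem_mul ha hb
  rwa [g.mul_eq_bot s t h] at hab

theorem unit_source_ne_zero {e f : Obj} {s : e ⟶ f} {x : R} (hx : x ∈ g.deg s) (hx0 : x ≠ 0) :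
    g.unit e ≠ 0 := by
  rintro he
  exact hx0 (by rw [← g.mul_unit s x hx, he, mul_zero])

theorem unit_target_ne_zero {e f : Obj} {s : e ⟶ f} {x : R} (hx : x ∈ g.deg s) (hx0 : x ≠ 0) :
    g.unit f ≠ 0 := by
  rintro hf
  exact hx0 (by rw [← g.unit_mul s x hx, hf, zero_mul])

theorem sum_unit_mul {E : Finset Obj} {e f : Obj} (hf : f ∈ E) {s : e ⟶ f} {x : R}
    (hx : x ∈ g.deg s) : (∑ e' ∈ E, g.unit e') * x = x := by
  rw [Finset.sum_mul, Finset.sum_eq_single_of_mem f hf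
    fun e' _ hne => g.mul_eq_zero_of_ne hne.symm (g.unit_mem e') hx]
  exact g.unit_mul s x hx

theorem mul_sum_unit {E : Finset Obj} {e f : Obj} (he : e ∈ E) {s : e ⟶ f} {x : R}
    (hx : x ∈ g.deg s) : x * ∑ e' ∈ E, g.unit e' = x := by
  rw [Finset.mul_sum, Finset.sum_eq_single_of_mem e he
    fun e' _ hne => g.mul_eq_zero_of_ne hne hx (g.unit_mem e')]
  exact g.mul_unit s x hx

theorem finite_setOf_unit_ne_zero {u : R} (hu : ∀ r, u * r = r) :
    {e | g.unit e ≠ 0}.Finite := by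
  have hsupp : {e | u * g.unit e ≠ 0}.Finite := by
    refine AddSubgroup.iSup_induction _ (g.iSup_deg_eq_top ▸ AddSubgroup.mem_top u)
      (C := fun r => {e | r * g.unit e ≠ 0}.Finite) ?_ ?_ ?_
    · rintro ⟨a, b, s⟩ x hx
      refine (Set.finite_singleton a).subset fun e he => ?_
      by_contra hne
      exact he (g.mul_eq_zero_of_ne hne hx (g.unit_mem e))
    · simp
    · intro x y hx hy
      refine (hx.union hy).subset fun e he => ?_
      by_contra h
      simp only [Set.mem_union, Set.mem_ofPred_eq, not_or, not_not] at h
      exact he (by rw [add_mul, h.1, h.2, add_zero])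
  simpa only [hu] using hsupp

end CatGradedRing

namespace Subcat

variable {Obj : Type*} [Category Obj]

def full (E : Set Obj) : Subcat Obj where
  objs := E
  homs e f := {_s | e ∈ E ∧ f ∈ E}
  id_mem _ he := ⟨he, he⟩
  comp_mem _ _ hs ht := ⟨hs.1, ht.2⟩
  dom_mem _ hs := hs.1
  cod_mem _ hs := hs.2

variable {R : Type*} [NonUnitalRing R] (g : CatGradedRing Obj R)

theorem deg_le_part (H : Subcat Obj) {e f : Obj} {s : e ⟶ f} (hs : s ∈ H.homs e f) :
    g.deg s ≤ H.part g :=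
  le_iSup_of_le e <| le_iSup_of_le f <| le_iSup_of_le s <| le_iSup (fun _ => g.deg s) hs

theorem part_full_unit_ne_zero_eq_top : (full {e | g.unit e ≠ 0}).part g = ⊤ := by
  refine eq_top_iff.2 (g.iSup_deg_eq_top ▸ iSup_le fun ⟨e, f, s⟩ x hx => ?_)
  by_cases hx0 : x = 0
  · subst hx0; exact zero_mem _
  · have hs : s ∈ (full {e | g.unit e ≠ 0}).homs e f :=
      ⟨g.unit_source_ne_zero hx hx0, g.unit_target_ne_zero hx hx0⟩
    exact deg_le_part g _ hs hx

theorem exists_one_of_part_eq_top {H : Subcat Obj} (hfin : H.objs.Finite) (htop : H.part g = ⊤) :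
    ∃ u : R, ∀ r : R, u * r = r ∧ r * u = r := by
  let u := ∑ e ∈ hfin.toFinset, g.unit e
  let fixed : AddSubgroup R :=
    (AddMonoidHom.mulLeft u).eqLocus (AddMonoidHom.id R) ⊓
      (AddMonoidHom.mulRight u).eqLocus (AddMonoidHom.id R)
  have hle : H.part g ≤ fixed :=
    iSup_le fun e => iSup_le fun f => iSup_le fun s => iSup_le fun hs x hx =>
      ⟨g.sum_unit_mul (hfin.mem_toFinset.2 (H.cod_mem s hs)) hx,
        g.mul_sum_unit (hfin.mem_toFinset.2 (H.dom_mem s hs)) hx⟩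
  exact ⟨u, fun r => hle (htop ▸ AddSubgroup.mem_top r)⟩

end Subcat

/-- A locally unital ring `R` graded by a category `G` is unital iff
`R = ⊕_{s ∈ H} R_s` for a subcategory `H` of `G` with finitely many objects; moreover, `H`
may be chosen so that `1_{R_e} ≠ 0` for every object `e` of `H`. -/
theorem catGradedRing_unital_iff {Obj : Type*} [Category Obj] {R : Type*} [NonUnitalRing R]
    (g : CatGradedRing Obj R) :
    ((∃ u : R, ∀ r : R, u * r = r ∧ r * u = r) ↔
      ∃ H : Subcat Obj, H.objs.Finite ∧ H.part g = ⊤) ∧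
    ((∃ u : R, ∀ r : R, u * r = r ∧ r * u = r) →
      ∃ H : Subcat Obj, H.objs.Finite ∧ H.part g = ⊤ ∧ ∀ e ∈ H.objs, g.unit e ≠ 0) := by
  have refined : (∃ u : R, ∀ r : R, u * r = r ∧ r * u = r) →
      ∃ H : Subcat Obj, H.objs.Finite ∧ H.part g = ⊤ ∧ ∀ e ∈ H.objs, g.unit e ≠ 0 :=
    fun ⟨u, hu⟩ => ⟨Subcat.full {e | g.unit e ≠ 0},
      g.finite_setOf_unit_ne_zero fun r => (hu r).1, Subcat.part_full_unit_ne_zero_eq_top g,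
      fun _ he => he⟩
  refine ⟨⟨fun hu => ?_, fun ⟨H, hfin, htop⟩ => Subcat.exists_one_of_part_eq_top g hfin htop⟩,
    refined⟩
  obtain ⟨H, hfin, htop, -⟩ := refined hu
  exact ⟨H, hfin, htop⟩
end

section
/- Let R be a locally unital ring strongly graded by a groupoid G. For each s in G define σ_s : C_{R_{G_{d(s)}}}(R_{d(s)}) → C_{R_{G_{c(s)}}}(R_{c(s)}) as the unique ring isomorphism satisfying σ_s(x) r_s = r_s x for all x in the domain and all r_s in R_s. Then σ is a functor from G to rings: σ_e = id for objects e, and σ_{st} = σ_s ∘ σ_t for composable s, t. -/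
/-!
Since the grading is strong and `G` is a groupoid, `1_{R_f} ∈ R_s R_{s⁻¹}` for every
`s : e ⟶ f`. Writing `1_{R_f} = ∑ aᵢ bᵢ` with `aᵢ ∈ R_s`, `bᵢ ∈ R_{s⁻¹}`, the element
`σ_s(x) := ∑ aᵢ x bᵢ` satisfies `σ_s(x) r = r x` because each `bᵢ r ∈ R_e` commutes with `x`;
and an element of `R_{G_f}` is determined by its right products with `R_s`, since right
multiplication by `R_s R_{s⁻¹} ∋ 1_{R_f}` recovers it. This uniqueness gives all the
ring-homomorphism identities and the functoriality `σ_{st} = σ_s ∘ σ_t` (using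
`R_{st} = R_s R_t`); bijectivity then follows from `σ_s ∘ σ_{s⁻¹} = σ_{𝟙} = id`.
-/

open Pointwise CategoryTheory

/-- The subring `R_{G_e}` spanned by the components of the isotropy group at `e`. -/
def CatGradedRing.iso {Obj : Type*} [Category Obj] {R : Type*} [NonUnitalRing R]
    (g : CatGradedRing Obj R) (e : Obj) : AddSubgroup R :=
  ⨆ s : e ⟶ e, g.deg s

/-- The commutant `C_{R_{G_e}}(R_e)` of `R_e` inside `R_{G_e}`. -/
def CatGradedRing.comm {Obj : Type*} [Category Obj] {R : Type*} [NonUnitalRing R]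
    (g : CatGradedRing Obj R) (e : Obj) : Set R :=
  {r : R | r ∈ g.iso e ∧ ∀ a ∈ g.deg (𝟙 e), a * r = r * a}

/-- `σs` is the ring isomorphism `C_{R_{G_{d(s)}}}(R_{d(s)}) → C_{R_{G_{c(s)}}}(R_{c(s)})`
satisfying `σs(x) r = r x` for all `r ∈ R_s`. -/
def CatGradedRing.IsSigma {Obj : Type*} [Category Obj] {R : Type*} [NonUnitalRing R]
    (g : CatGradedRing Obj R) {e f : Obj} (s : e ⟶ f) (σs : R → R) : Prop :=
  Set.BijOn σs (g.comm e) (g.comm f) ∧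
  (∀ x ∈ g.comm e, ∀ y ∈ g.comm e, σs (x + y) = σs x + σs y) ∧
  (∀ x ∈ g.comm e, ∀ y ∈ g.comm e, σs (x * y) = σs x * σs y) ∧
  σs (g.unit e) = g.unit f ∧
  ∀ x ∈ g.comm e, ∀ r ∈ g.deg s, σs x * r = r * x


namespace CatGradedRing

section Category

variable {Obj : Type*} [Category Obj] {R : Type*} [NonUnitalRing R] (g : CatGradedRing Obj R)

theorem deg_le_iso {e : Obj} (t : e ⟶ e) : g.deg t ≤ g.iso e :=
  le_iSup (fun s : e ⟶ e => g.deg s) t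

theorem unit_mem_iso (e : Obj) : g.unit e ∈ g.iso e :=
  g.deg_le_iso (𝟙 e) (g.unit_mem e)

theorem mul_unit_of_mem_iso {e : Obj} {z : R} (hz : z ∈ g.iso e) : z * g.unit e = z := by
  refine AddSubgroup.iSup_induction (C := fun z => z * g.unit e = z)
    (fun t : e ⟶ e => g.deg t) hz (fun t x hx => g.mul_unit t x hx) (by simp) ?_
  intro x y hx hy
  rw [add_mul, hx, hy]

theorem mul_mem_iso {e : Obj} {x y : R} (hx : x ∈ g.iso e) (hy : y ∈ g.iso e) :
    x * y ∈ g.iso e := by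
  refine AddSubgroup.iSup_induction (C := fun x => x * y ∈ g.iso e)
    (fun t : e ⟶ e => g.deg t) hx (fun t x hx => ?_) (by simp) ?_
  · refine AddSubgroup.iSup_induction (C := fun y => x * y ∈ g.iso e)
      (fun t : e ⟶ e => g.deg t) hy (fun t' y hy => ?_) (by simp) ?_
    · exact g.deg_le_iso _ (g.mul_le t t' (AddSubmonoid.mul_mem_mul hx hy))
    · intro a b ha hb
      rw [mul_add]
      exact add_mem ha hb
  · intro a b ha hb
    rw [add_mul]
    exact add_mem ha hb

theorem mul_mul_mem_iso {e f : Obj} {s : e ⟶ f} {t : f ⟶ e} {a b x : R}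
    (ha : a ∈ g.deg s) (hb : b ∈ g.deg t) (hx : x ∈ g.iso e) : a * x * b ∈ g.iso f := by
  refine AddSubgroup.iSup_induction (C := fun x => a * x * b ∈ g.iso f)
    (fun u : e ⟶ e => g.deg u) hx (fun u x hx => ?_) (by simp) ?_
  · have hax : a * x ∈ g.deg (u ≫ s) := g.mul_le s u (AddSubmonoid.mul_mem_mul ha hx)
    exact g.deg_le_iso _ (g.mul_le (u ≫ s) t (AddSubmonoid.mul_mem_mul hax hb))
  · intro x y hx hy
    rw [mul_add, add_mul]
    exact add_mem hx hy

theorem unit_mem_comm (e : Obj) : g.unit e ∈ g.comm e :=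
  ⟨g.unit_mem_iso e, fun a ha => by rw [g.mul_unit (𝟙 e) a ha, g.unit_mul (𝟙 e) a ha]⟩

variable {g}

theorem add_mem_comm {e : Obj} {x y : R} (hx : x ∈ g.comm e) (hy : y ∈ g.comm e) :
    x + y ∈ g.comm e := by
  refine ⟨add_mem hx.1 hy.1, fun a ha => ?_⟩
  rw [mul_add, add_mul, hx.2 a ha, hy.2 a ha]

theorem mul_mem_comm {e : Obj} {x y : R} (hx : x ∈ g.comm e) (hy : y ∈ g.comm e) :
    x * y ∈ g.comm e := by
  refine ⟨g.mul_mem_iso hx.1 hy.1, fun a ha => ?_⟩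
  rw [← mul_assoc, hx.2 a ha, mul_assoc, hy.2 a ha, mul_assoc]

end Category

section Groupoid

variable {Obj : Type*} [Groupoid Obj] {R : Type*} [NonUnitalRing R] {g : CatGradedRing Obj R}

theorem IsStrong.unit_mem_deg_mul_deg_inv (hstr : g.IsStrong) {e f : Obj} (s : e ⟶ f) :
    g.unit f ∈ g.deg s * g.deg (Groupoid.inv s) := by
  rw [hstr s (Groupoid.inv s), Groupoid.inv_comp]
  exact g.unit_mem f

theorem IsStrong.eq_of_forall_mul_deg_eq (hstr : g.IsStrong) {e f : Obj} (s : e ⟶ f)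
    {y₁ y₂ : R} (h₁ : y₁ ∈ g.iso f) (h₂ : y₂ ∈ g.iso f)
    (h : ∀ r ∈ g.deg s, y₁ * r = y₂ * r) : y₁ = y₂ := by
  have key : ∀ u ∈ g.deg s * g.deg (Groupoid.inv s), y₁ * u = y₂ * u := by
    intro u hu
    refine AddSubmonoid.mul_induction_on hu (fun a ha b hb => ?_) (fun a b pa pb => ?_)
    · rw [← mul_assoc, ← mul_assoc, h a ha]
    · rw [mul_add, mul_add, pa, pb]
  have := key _ (hstr.unit_mem_deg_mul_deg_inv s)
  rwa [g.mul_unit_of_mem_iso h₁, g.mul_unit_of_mem_iso h₂] at this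

theorem IsStrong.mem_comm_of_forall_mul_eq (hstr : g.IsStrong) {e f : Obj} (s : e ⟶ f)
    {x y : R} (hy : y ∈ g.iso f) (hxy : ∀ r ∈ g.deg s, y * r = r * x) :
    y ∈ g.comm f := by
  refine ⟨hy, fun c hc => ?_⟩
  have hc' : c ∈ g.iso f := g.deg_le_iso (𝟙 f) hc
  refine hstr.eq_of_forall_mul_deg_eq s (g.mul_mem_iso hc' hy) (g.mul_mem_iso hy hc')
    fun r hr => ?_
  have hcr : c * r ∈ g.deg s := by
    simpa using g.mul_le (𝟙 f) s (AddSubmonoid.mul_mem_mul hc hr)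
  rw [mul_assoc, hxy r hr, mul_assoc, hxy _ hcr, mul_assoc]

theorem exists_mem_iso_mul_eq {e f : Obj} (s : e ⟶ f) {x : R} (hx : x ∈ g.comm e) {u : R}
    (hu : u ∈ g.deg s * g.deg (Groupoid.inv s)) :
    ∃ y ∈ g.iso f, ∀ r ∈ g.deg s, y * r = u * (r * x) := by
  refine AddSubmonoid.mul_induction_on hu (fun a ha b hb => ?_) (fun a b ha hb => ?_)
  · refine ⟨a * x * b, g.mul_mul_mem_iso ha hb hx.1, fun r hr => ?_⟩
    have hbr : b * r ∈ g.deg (𝟙 e) := by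
      simpa using g.mul_le (Groupoid.inv s) s (AddSubmonoid.mul_mem_mul hb hr)
    calc a * x * b * r = a * (x * (b * r)) := by simp only [mul_assoc]
      _ = a * (b * r * x) := by rw [hx.2 _ hbr]
      _ = a * b * (r * x) := by simp only [mul_assoc]
  · obtain ⟨y₁, hy₁, hr₁⟩ := ha
    obtain ⟨y₂, hy₂, hr₂⟩ := hb
    exact ⟨y₁ + y₂, add_mem hy₁ hy₂,
      fun r hr => by rw [add_mul, hr₁ r hr, hr₂ r hr, add_mul]⟩

theorem IsStrong.exists_mem_comm_mul_eq (hstr : g.IsStrong) {e f : Obj} (s : e ⟶ f) {x : R}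
    (hx : x ∈ g.comm e) : ∃ y ∈ g.comm f, ∀ r ∈ g.deg s, y * r = r * x := by
  obtain ⟨y, hy, hyr⟩ := exists_mem_iso_mul_eq s hx (hstr.unit_mem_deg_mul_deg_inv s)
  have hyr' : ∀ r ∈ g.deg s, y * r = r * x := fun r hr => by
    rw [hyr r hr, ← mul_assoc, g.unit_mul s r hr]
  exact ⟨y, hstr.mem_comm_of_forall_mul_eq s hy hyr', hyr'⟩

variable (g) in
open Classical in
/-- The map `σ_s`; its values outside `g.comm e` are junk. -/
noncomputable def sigma {e f : Obj} (s : e ⟶ f) (x : R) : R :=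
  if h : ∃ y ∈ g.comm f, ∀ r ∈ g.deg s, y * r = r * x then h.choose else 0

theorem IsStrong.sigma_spec (hstr : g.IsStrong) {e f : Obj} (s : e ⟶ f) {x : R}
    (hx : x ∈ g.comm e) : g.sigma s x ∈ g.comm f ∧ ∀ r ∈ g.deg s, g.sigma s x * r = r * x := by
  have h := hstr.exists_mem_comm_mul_eq s hx
  rw [sigma, dif_pos h]
  exact h.choose_spec

theorem IsStrong.mapsTo_sigma (hstr : g.IsStrong) {e f : Obj} (s : e ⟶ f) :
    Set.MapsTo (g.sigma s) (g.comm e) (g.comm f) :=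
  fun _ hx => (hstr.sigma_spec s hx).1

theorem IsStrong.sigma_mul (hstr : g.IsStrong) {e f : Obj} (s : e ⟶ f) {x : R}
    (hx : x ∈ g.comm e) {r : R} (hr : r ∈ g.deg s) : g.sigma s x * r = r * x :=
  (hstr.sigma_spec s hx).2 r hr

theorem IsStrong.eq_sigma (hstr : g.IsStrong) {e f : Obj} (s : e ⟶ f) {x y : R}
    (hx : x ∈ g.comm e) (hy : y ∈ g.comm f) (h : ∀ r ∈ g.deg s, y * r = r * x) :
    y = g.sigma s x :=
  hstr.eq_of_forall_mul_deg_eq s hy.1 (hstr.mapsTo_sigma s hx).1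
    fun r hr => by rw [h r hr, hstr.sigma_mul s hx hr]

theorem IsStrong.sigma_id (hstr : g.IsStrong) (e : Obj) :
    Set.EqOn (g.sigma (𝟙 e)) id (g.comm e) :=
  fun _ hx => (hstr.eq_sigma (𝟙 e) hx hx fun r hr => (hx.2 r hr).symm).symm

theorem IsStrong.sigma_comp (hstr : g.IsStrong) {e f h : Obj} (s : f ⟶ h) (t : e ⟶ f) :
    Set.EqOn (g.sigma (t ≫ s)) (g.sigma s ∘ g.sigma t) (g.comm e) := by
  intro x hx
  have htx := hstr.mapsTo_sigma t hx
  refine (hstr.eq_sigma (t ≫ s) hx (hstr.mapsTo_sigma s htx) fun r hr => ?_).symm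
  rw [← hstr s t] at hr
  refine AddSubmonoid.mul_induction_on hr (fun p hp q hq => ?_) (fun a b ha hb => ?_)
  · calc g.sigma s (g.sigma t x) * (p * q) = p * (g.sigma t x * q) := by
          rw [← mul_assoc, hstr.sigma_mul s htx hp, mul_assoc]
      _ = p * q * x := by rw [hstr.sigma_mul t hx hq, mul_assoc]
  · rw [mul_add, add_mul, ha, hb]

theorem IsStrong.sigma_inv_sigma (hstr : g.IsStrong) {e f : Obj} (s : e ⟶ f) :
    Set.LeftInvOn (g.sigma (Groupoid.inv s)) (g.sigma s) (g.comm e) := fun x hx => by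
  rw [← Function.comp_apply (f := g.sigma _), ← hstr.sigma_comp _ _ hx, Groupoid.comp_inv,
    hstr.sigma_id e hx, id]

theorem IsStrong.bijOn_sigma (hstr : g.IsStrong) {e f : Obj} (s : e ⟶ f) :
    Set.BijOn (g.sigma s) (g.comm e) (g.comm f) := by
  refine Set.InvOn.bijOn ⟨hstr.sigma_inv_sigma s, ?_⟩ (hstr.mapsTo_sigma s)
    (hstr.mapsTo_sigma (Groupoid.inv s))
  simpa using hstr.sigma_inv_sigma (Groupoid.inv s)

theorem IsStrong.sigma_add (hstr : g.IsStrong) {e f : Obj} (s : e ⟶ f) {x y : R}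
    (hx : x ∈ g.comm e) (hy : y ∈ g.comm e) :
    g.sigma s (x + y) = g.sigma s x + g.sigma s y :=
  (hstr.eq_sigma s (add_mem_comm hx hy)
    (add_mem_comm (hstr.mapsTo_sigma s hx) (hstr.mapsTo_sigma s hy)) fun r hr => by
      rw [add_mul, hstr.sigma_mul s hx hr, hstr.sigma_mul s hy hr, mul_add]).symm

theorem IsStrong.sigma_mul_sigma (hstr : g.IsStrong) {e f : Obj} (s : e ⟶ f) {x y : R}
    (hx : x ∈ g.comm e) (hy : y ∈ g.comm e) :
    g.sigma s (x * y) = g.sigma s x * g.sigma s y :=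
  (hstr.eq_sigma s (mul_mem_comm hx hy)
    (mul_mem_comm (hstr.mapsTo_sigma s hx) (hstr.mapsTo_sigma s hy)) fun r hr => by
      rw [mul_assoc, hstr.sigma_mul s hy hr, ← mul_assoc, hstr.sigma_mul s hx hr,
        mul_assoc]).symm

theorem IsStrong.sigma_unit (hstr : g.IsStrong) {e f : Obj} (s : e ⟶ f) :
    g.sigma s (g.unit e) = g.unit f :=
  (hstr.eq_sigma s (g.unit_mem_comm e) (g.unit_mem_comm f) fun r hr => by
    rw [g.unit_mul s r hr, g.mul_unit s r hr]).symm

theorem IsStrong.isSigma_sigma (hstr : g.IsStrong) {e f : Obj} (s : e ⟶ f) :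
    g.IsSigma s (g.sigma s) :=
  ⟨hstr.bijOn_sigma s, fun _ hx _ hy => hstr.sigma_add s hx hy,
    fun _ hx _ hy => hstr.sigma_mul_sigma s hx hy, hstr.sigma_unit s,
    fun _ hx _ hr => hstr.sigma_mul s hx hr⟩

theorem IsStrong.eqOn_sigma_of_isSigma (hstr : g.IsStrong) {e f : Obj} (s : e ⟶ f)
    {σ : R → R} (hσ : g.IsSigma s σ) : Set.EqOn σ (g.sigma s) (g.comm e) :=
  fun _ hx => hstr.eq_sigma s hx (hσ.1.mapsTo hx) (hσ.2.2.2.2 _ hx)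

end Groupoid

end CatGradedRing

/-- For a locally unital ring strongly graded by a groupoid `G`, the unique
ring isomorphisms `σ_s : C_{R_{G_{d(s)}}}(R_{d(s)}) → C_{R_{G_{c(s)}}}(R_{c(s)})` with
`σ_s(x) r_s = r_s x` exist and define a functor: `σ_{𝟙 e} = id` and
`σ_{st} = σ_s ∘ σ_t` for composable `s, t`. -/
theorem catGradedRing_sigma_functor {Obj : Type*} [Groupoid Obj] {R : Type*} [NonUnitalRing R]
    (g : CatGradedRing Obj R) (hstr : g.IsStrong) :
    ∃ σ : ∀ (e f : Obj), (e ⟶ f) → R → R,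
      (∀ (e f : Obj) (s : e ⟶ f), g.IsSigma s (σ e f s)) ∧
      (∀ (e f : Obj) (s : e ⟶ f) (σ' : R → R), g.IsSigma s σ' →
        Set.EqOn σ' (σ e f s) (g.comm e)) ∧
      (∀ e : Obj, Set.EqOn (σ e e (𝟙 e)) id (g.comm e)) ∧
      (∀ (e f h : Obj) (s : f ⟶ h) (t : e ⟶ f),
        Set.EqOn (σ e h (t ≫ s)) (σ f h s ∘ σ e f t) (g.comm e)) :=
  ⟨fun _ _ s => g.sigma s, fun _ _ => hstr.isSigma_sigma,
    fun _ _ s _ => hstr.eqOn_sigma_of_isSigma s, hstr.sigma_id, fun _ _ _ => hstr.sigma_comp⟩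
end

section
/- Let R be a unital ring strongly graded by a group G, and H a subgroup of G. Then C_R(R_H) = C_R(R_e)^H, the set of elements of the commutant of R_e fixed by σ_s for all s in H. -/
/-!
Strong grading puts `1` in `R_s R_{s⁻¹}`, so an element of `R` is determined by its products
with `R_s`. Since `σ_s x` and `x` both multiply `R_s` to `r ↦ r x`, `σ_s x = x` says exactly that
`x` commutes with `R_s`; and `C_R(R_H)` is the intersection of the commutants of the `R_s`,
`s ∈ H`. That `1 ∈ R_e` is not assumed: the degree-`e` component of `1` is a right identity on
homogeneous elements, hence on all of `R`.
-/

open Pointwise DirectSum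

section GradedOne

variable {G : Type*} [Monoid G] [IsLeftCancelMul G] [DecidableEq G] {R : Type*} [Ring R]
  (𝒜 : G → AddSubgroup R)

theorem DirectSum.mul_decompose_one_one_of_mem [Decomposition 𝒜]
    (hmul : ∀ {s t : G} {a b : R}, a ∈ 𝒜 s → b ∈ 𝒜 t → a * b ∈ 𝒜 (s * t))
    {t : G} {x : R} (hx : x ∈ 𝒜 t) : x * (decompose 𝒜 (1 : R) 1 : R) = x := by
  classical
  have hx1 : x * (decompose 𝒜 (1 : R) 1 : R) ∈ 𝒜 t := by
    simpa using hmul hx (decompose 𝒜 (1 : R) 1).2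
  calc x * (decompose 𝒜 (1 : R) 1 : R)
      = ∑ s ∈ (decompose 𝒜 (1 : R)).support, (decompose 𝒜 (x * decompose 𝒜 (1 : R) s) t : R) := by
        rw [Finset.sum_eq_single 1, decompose_of_mem_same 𝒜 hx1]
        · intro s _ hs
          rw [decompose_of_mem_ne 𝒜 (hmul hx (decompose 𝒜 (1 : R) s).2)
            (fun h => hs (mul_eq_left.mp h))]
        · intro h
          rw [DFinsupp.notMem_support_iff.mp h, ZeroMemClass.coe_zero, mul_zero, decompose_zero,
            zero_apply, ZeroMemClass.coe_zero]
    _ = (decompose 𝒜 (x * 1) t : R) := by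
        conv_rhs => rw [← sum_support_decompose 𝒜 (1 : R), Finset.mul_sum, decompose_sum,
          DFinsupp.finsetSum_apply, AddSubgroup.val_finsetSum]
    _ = x := by rw [mul_one, decompose_of_mem_same 𝒜 hx]

theorem DirectSum.IsInternal.one_mem (h : IsInternal 𝒜)
    (hmul : ∀ {s t : G} {a b : R}, a ∈ 𝒜 s → b ∈ 𝒜 t → a * b ∈ 𝒜 (s * t)) :
    (1 : R) ∈ 𝒜 1 := by
  let := h.chooseDecomposition
  have hright : ∀ x : R, x * (decompose 𝒜 (1 : R) 1 : R) = x := by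
    refine Decomposition.inductionOn 𝒜 (by simp) (fun m => ?_) (fun a b ha hb => ?_)
    · exact mul_decompose_one_one_of_mem 𝒜 hmul m.2
    · rw [add_mul, ha, hb]
  have h1 : (decompose 𝒜 (1 : R) 1 : R) = 1 := by simpa using hright 1
  exact h1 ▸ (decompose 𝒜 (1 : R) 1).2

end GradedOne

section Commutant

variable {R : Type*} [Ring R]

theorem AddSubgroup.eq_of_forall_mul_eq_mul_of_one_mem_mul {A B : AddSubgroup R}
    (h1 : (1 : R) ∈ A * B) {u v : R} (h : ∀ a ∈ A, u * a = v * a) : u = v := by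
  have hAB : ∀ m ∈ A.toAddSubmonoid * B.toAddSubmonoid, u * m = v * m := fun m hm =>
    AddSubmonoid.mul_induction_on hm (fun a ha b _ => by rw [← mul_assoc, h a ha, mul_assoc])
      fun m m' hm hm' => by rw [mul_add, mul_add, hm, hm']
  simpa using hAB 1 h1

theorem AddSubgroup.forall_mem_iSup_mul_comm_iff {ι : Sort*} (A : ι → AddSubgroup R) (y : R) :
    (∀ r ∈ ⨆ i, A i, r * y = y * r) ↔ ∀ i, ∀ r ∈ A i, r * y = y * r := by
  have hcentralizer : ∀ K : AddSubgroup R,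
      (∀ r ∈ K, r * y = y * r) ↔ K ≤ (Subring.centralizer {y}).toAddSubgroup := fun K => by
    simp [SetLike.le_def, Set.mem_centralizer_iff, eq_comm]
  simp only [hcentralizer, iSup_le_iff]

end Commutant

theorem miyashita_commutant_general {G : Type*} [Group G] {R : Type*} [Ring R]
    (𝒜 : G → AddSubgroup R)
    -- `R = ⊕_{s ∈ G} R_s`
    (hinternal :
      letI := Classical.decEq G
      DirectSum.IsInternal 𝒜)
    -- strongly graded
    (hstrong : ∀ s t : G, 𝒜 s * 𝒜 t = 𝒜 (s * t))
    -- the canonical action of `G` on `C_R(R_e)`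
    (σ : G → R → R)
    (hσ : ∀ (s : G), ∀ x ∈ {r : R | ∀ a ∈ 𝒜 1, a * r = r * a},
      ∀ r ∈ 𝒜 s, σ s x * r = r * x)
    (H : Subgroup G) :
    {y : R | ∀ r ∈ ⨆ s ∈ H, 𝒜 s, r * y = y * r} =
      {y : R | (∀ a ∈ 𝒜 1, a * y = y * a) ∧ ∀ s ∈ H, σ s y = y} := by
  let := Classical.decEq G
  have hmul {s t : G} {a b : R} (ha : a ∈ 𝒜 s) (hb : b ∈ 𝒜 t) : a * b ∈ 𝒜 (s * t) :=
    hstrong s t ▸ AddSubmonoid.mul_mem_mul ha hb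
  have hunit (s : G) : (1 : R) ∈ 𝒜 s * 𝒜 s⁻¹ := by
    rw [hstrong, mul_inv_cancel]
    exact hinternal.one_mem 𝒜 hmul
  ext y
  simp only [Set.mem_ofPred_eq, AddSubgroup.forall_mem_iSup_mul_comm_iff]
  constructor
  · intro hy
    have hy1 := hy 1 H.one_mem
    refine ⟨hy1, fun s hs => ?_⟩
    exact AddSubgroup.eq_of_forall_mul_eq_mul_of_one_mem_mul (hunit s) fun r hr => by
      rw [hσ s y hy1 r hr, hy s hs r hr]
  · rintro ⟨hy1, hfix⟩ s hs r hr
    rw [← hσ s y hy1 r hr, hfix s hs]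

/-- **Miyashita.** Let `R` be a unital ring strongly graded by the group `G`
and `H` a subgroup of `G`. Then `C_R(R_H) = C_R(R_e)^H`, the fixed subring of the commutant
of the identity component under the canonical action `σ`. -/
theorem miyashita_commutant {G : Type*} [Group G] {R : Type*} [Ring R]
    (𝒜 : G → AddSubgroup R)
    -- `R = ⊕_{s ∈ G} R_s`
    (hinternal :
      letI := Classical.decEq G
      DirectSum.IsInternal 𝒜)
    -- strongly graded
    (hstrong : ∀ s t : G, 𝒜 s * 𝒜 t = 𝒜 (s * t))
    -- the canonical action of `G` on `C_R(R_e)`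
    (σ : G → R → R)
    (hσmap : ∀ (s : G), ∀ x ∈ {r : R | ∀ a ∈ 𝒜 1, a * r = r * a},
      σ s x ∈ {r : R | ∀ a ∈ 𝒜 1, a * r = r * a})
    (hσ : ∀ (s : G), ∀ x ∈ {r : R | ∀ a ∈ 𝒜 1, a * r = r * a},
      ∀ r ∈ 𝒜 s, σ s x * r = r * x)
    (H : Subgroup G) :
    {y : R | ∀ r ∈ ⨆ s ∈ H, 𝒜 s, r * y = y * r} =
      {y : R | (∀ a ∈ 𝒜 1, a * y = y * a) ∧ ∀ s ∈ H, σ s y = y} :=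
  miyashita_commutant_general 𝒜 hinternal hstrong σ hσ H
end

section
/- Let K be a nontrivial commutative unital ring, G a small category, and s_1,…,s_n ∈ G. For s ∈ G let R_s ⊆ M_n(K) be the K-span of the matrix units e_{ij} with s_i s = s_j (composition defined). Then the family (R_s)_{s∈G} is a G-filter in R = Σ_s R_s: R_s R_t ⊆ R_{st} whenever (s,t) is composable, and R_s R_t = 0 otherwise. Furthermore, if s_i s ∈ {s_1,…,s_n} whenever (s_i, s) is composable, then R_s R_t = R_{st} for all composable (s,t). -/
open Pointwise CategoryTheory

/-- `SComp a b c` : the morphisms `a` and `b` (as objects of the total morphism type) are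
composable in the sense `d(a) = c(b)`, and `c = ab` is their composite. -/
def SComp {Obj : Type*} [Category Obj] (a b c : Σ e f : Obj, e ⟶ f) : Prop :=
  ∃ h : b.2.1 = a.1, c = ⟨b.1, a.2.1, (b.2.2 ≫ eqToHom h) ≫ a.2.2⟩

/-- The homogeneous component `R_t ⊆ M_n(K)`: the `K`-span of the matrix units `e_{ij}`
with `s_i t = s_j`. -/
def matDeg {Obj : Type*} [Category Obj] (K : Type*) [CommRing K] {n : ℕ}
    (s : Fin n → Σ e f : Obj, e ⟶ f) (t : Σ e f : Obj, e ⟶ f) :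
    Submodule K (Matrix (Fin n) (Fin n) K) :=
  Submodule.span K
    {M | ∃ i j : Fin n, SComp (s i) t (s j) ∧ M = Matrix.single i j (1 : K)}

/-! The products of matrix units are `e_{ij} e_{kl} = δ_{jk} e_{il}`, so a product of two spans of
matrix units is spanned by the units `e_{il}` obtained by chaining an index pair of the first
family with one of the second. For the families `R_a`, `R_b` such a chain `s_i a = s_j`,
`s_j b = s_l` exists only if `(a, b)` is composable, and then `s_i (ab) = s_l` by associativity.
Conversely, if `s_i (ab) = s_l` then `s_i a` is defined, and under the closure hypothesis it is
some `s_j`; cancelling gives `s_j b = s_l`, which factors `e_{il} = e_{ij} e_{jl}`. -/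

namespace Matrix

variable (K : Type*) [CommSemiring K] {ι : Type*} [DecidableEq ι]

def spanSingles (r : ι → ι → Prop) : Submodule K (Matrix ι ι K) :=
  Submodule.span K {M | ∃ i j, r i j ∧ M = single i j (1 : K)}

variable {K}

theorem single_one_mem_spanSingles {r : ι → ι → Prop} {i j : ι} (h : r i j) :
    single i j (1 : K) ∈ spanSingles K r :=
  Submodule.subset_span ⟨i, j, h, rfl⟩

theorem spanSingles_false : spanSingles K (fun _ _ : ι => False) = ⊥ := by
  simp [spanSingles]

variable [Fintype ι]

theorem spanSingles_mul_le {r r' r'' : ι → ι → Prop}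
    (h : ∀ i j l, r i j → r' j l → r'' i l) :
    spanSingles K r * spanSingles K r' ≤ spanSingles K r'' := by
  rw [spanSingles, spanSingles, Submodule.span_mul_span, Submodule.span_le]
  rintro _ ⟨_, ⟨i, j, hij, rfl⟩, _, ⟨k, l, hkl, rfl⟩, rfl⟩
  dsimp only
  by_cases hjk : j = k
  · subst hjk
    rw [single_mul_single_same, one_mul]
    exact single_one_mem_spanSingles (h i j l hij hkl)
  · rw [single_mul_single_of_ne (h := hjk)]
    exact Submodule.zero_mem _

theorem spanSingles_le_mul {r r' r'' : ι → ι → Prop}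
    (h : ∀ i l, r'' i l → ∃ j, r i j ∧ r' j l) :
    spanSingles K r'' ≤ spanSingles K r * spanSingles K r' := by
  rw [spanSingles, Submodule.span_le]
  rintro _ ⟨i, l, hil, rfl⟩
  obtain ⟨j, hij, hjl⟩ := h i l hil
  rw [← one_mul (1 : K), ← single_mul_single_same (c := (1 : K)) i j l]
  exact Submodule.mul_mem_mul (single_one_mem_spanSingles hij) (single_one_mem_spanSingles hjl)

end Matrix

namespace SComp

variable {Obj : Type*} [Category Obj] {a b c x y z : Σ e f : Obj, e ⟶ f}

theorem assoc (habc : SComp a b c) (hxay : SComp x a y) (hybz : SComp y b z) :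
    SComp x c z := by
  obtain ⟨_, _, _⟩ := a
  obtain ⟨_, _, _⟩ := b
  obtain ⟨_, _, _⟩ := x
  obtain ⟨_, rfl⟩ := habc
  obtain ⟨hxa, rfl⟩ := hxay
  obtain ⟨_, rfl⟩ := hybz
  exact ⟨hxa, by simp⟩

theorem cancel_left (habc : SComp a b c) (hxcz : SComp x c z) (hxay : SComp x a y) :
    SComp y b z := by
  obtain ⟨_, _, _⟩ := a
  obtain ⟨_, _, _⟩ := b
  obtain ⟨_, _, _⟩ := x
  obtain ⟨hab, rfl⟩ := habc
  obtain ⟨_, rfl⟩ := hxay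
  obtain ⟨_, rfl⟩ := hxcz
  exact ⟨hab, by simp⟩

theorem exists_of_chain (hxay : SComp x a y) (hybz : SComp y b z) : ∃ c, SComp a b c := by
  obtain ⟨_, rfl⟩ := hxay
  obtain ⟨hby, _⟩ := hybz
  exact ⟨_, hby, rfl⟩

theorem exists_left (habc : SComp a b c) (hxcz : SComp x c z) : ∃ y, SComp x a y := by
  obtain ⟨_, rfl⟩ := habc
  obtain ⟨hcx, _⟩ := hxcz
  exact ⟨_, hcx, rfl⟩

end SComp

theorem matDeg_eq_spanSingles {Obj : Type*} [Category Obj] (K : Type*) [CommRing K] {n : ℕ}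
    (s : Fin n → Σ e f : Obj, e ⟶ f) (t : Σ e f : Obj, e ⟶ f) :
    matDeg K s t = Matrix.spanSingles K (fun i j => SComp (s i) t (s j)) :=
  rfl

theorem matDeg_filter_general {Obj : Type*} [Category Obj] (K : Type*) [CommRing K]
    {n : ℕ} (s : Fin n → Σ e f : Obj, e ⟶ f) :
    (∀ a b c : Σ e f : Obj, e ⟶ f, SComp a b c →
      matDeg K s a * matDeg K s b ≤ matDeg K s c) ∧
    (∀ a b : Σ e f : Obj, e ⟶ f, (¬∃ c, SComp a b c) →
      matDeg K s a * matDeg K s b = ⊥) ∧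
    ((∀ (i : Fin n) (b c : Σ e f : Obj, e ⟶ f), SComp (s i) b c → ∃ j : Fin n, s j = c) →
      ∀ a b c : Σ e f : Obj, e ⟶ f, SComp a b c →
        matDeg K s a * matDeg K s b = matDeg K s c) := by
  simp only [matDeg_eq_spanSingles]
  have mul_le : ∀ a b c : Σ e f : Obj, e ⟶ f, SComp a b c →
      Matrix.spanSingles K (fun i j => SComp (s i) a (s j)) *
        Matrix.spanSingles K (fun i j => SComp (s i) b (s j)) ≤
      Matrix.spanSingles K (fun i j => SComp (s i) c (s j)) :=
    fun a b c habc => Matrix.spanSingles_mul_le fun _ _ _ => habc.assoc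
  refine ⟨mul_le, fun a b hab => ?_, fun hclosed a b c habc => ?_⟩
  · rw [eq_bot_iff, ← Matrix.spanSingles_false]
    exact Matrix.spanSingles_mul_le fun _ _ _ hij hjl => hab (hij.exists_of_chain hjl)
  · refine le_antisymm (mul_le a b c habc) (Matrix.spanSingles_le_mul fun i l hil => ?_)
    obtain ⟨y, hiay⟩ := habc.exists_left hil
    obtain ⟨j, rfl⟩ := hclosed i a y hiay
    exact ⟨j, hiay, habc.cancel_left hil hiay⟩

/-- The family `(R_t)_{t ∈ mor(G)}` is a `G`-filter in `R = ∑ R_t`: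
`R_a R_b ⊆ R_{ab}` for composable pairs and `R_a R_b = 0` otherwise; it is a strong filter
provided `s_i b ∈ {s_1, …, s_n}` whenever `(s_i, b)` is composable. -/
theorem matDeg_filter {Obj : Type*} [Category Obj] (K : Type*) [CommRing K] [Nontrivial K]
    {n : ℕ} (s : Fin n → Σ e f : Obj, e ⟶ f) :
    (∀ a b c : Σ e f : Obj, e ⟶ f, SComp a b c →
      matDeg K s a * matDeg K s b ≤ matDeg K s c) ∧
    (∀ a b : Σ e f : Obj, e ⟶ f, (¬∃ c, SComp a b c) →
      matDeg K s a * matDeg K s b = ⊥) ∧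
    ((∀ (i : Fin n) (b c : Σ e f : Obj, e ⟶ f), SComp (s i) b c → ∃ j : Fin n, s j = c) →
      ∀ a b c : Σ e f : Obj, e ⟶ f, SComp a b c →
        matDeg K s a * matDeg K s b = matDeg K s c) :=
  matDeg_filter_general K s
end
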